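/- arXiv:2011.11342 — 9 statements merged into one kernel-verified Lean document; each statement's English description precedes it below -/
import Mathlib

section
/- Let I be an ideal on a set X and A a family of subsets of X. If every disjoint subfamily of A \ I is at most countable (A is I-ccc), then for every subset S of X there exists a countable subfamily F of {A ∈ A : A ⊆ S} such that every member of A contained in S \ ⋃F belongs to I (A is I-Lindelöf). -/
/-- I-ccc implies I-Lindelöf. -/
theorem ccc_implies_lindelof {X : Type*} (I 𝒜 : Set (Set X))
    (hne : I.Nonempty)
    (hdown : ∀ A B : Set X, A ∈ I → B ⊆ A → B ∈ I)
    (hunion : ∀ A B : Set X, A ∈ I → B ∈ I → A ∪ B ∈ I)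
    (hccc : ∀ 𝒟 : Set (Set X), 𝒟 ⊆ 𝒜 \ I → 𝒟.PairwiseDisjoint id → 𝒟.Countable) :
    ∀ S : Set X, ∃ ℱ : Set (Set X), ℱ ⊆ {A ∈ 𝒜 | A ⊆ S} ∧ ℱ.Countable ∧
      ∀ B ∈ 𝒜, B ⊆ S \ ⋃₀ ℱ → B ∈ I := by
  intro S
  have hempty : (∅ : Set X) ∈ I := by
    obtain ⟨A, hA⟩ := hne
    exact hdown A ∅ hA (Set.empty_subset A)
  set 𝒞 : Set (Set X) := {A ∈ 𝒜 | A ⊆ S} \ I with h𝒞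
  have hzorn := zorn_subset {𝒟 : Set (Set X) | 𝒟 ⊆ 𝒞 ∧ 𝒟.PairwiseDisjoint id} ?_
  · obtain ⟨𝒟, h𝒟max⟩ := hzorn
    obtain ⟨h𝒟sub, h𝒟disj⟩ := h𝒟max.prop
    refine ⟨𝒟, fun A hA => (h𝒟sub hA).1, ?_, ?_⟩
    · exact hccc 𝒟 (fun A hA => ⟨(h𝒟sub hA).1.1, (h𝒟sub hA).2⟩) h𝒟disj
    · intro B hB hBsub
      by_contra hBI
      have hB𝒞 : B ∈ 𝒞 := ⟨⟨hB, hBsub.trans (Set.diff_subset)⟩, hBI⟩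
      have hins : insert B 𝒟 ∈ {𝒟 : Set (Set X) | 𝒟 ⊆ 𝒞 ∧ 𝒟.PairwiseDisjoint id} := by
        refine ⟨Set.insert_subset hB𝒞 h𝒟sub, ?_⟩
        apply h𝒟disj.insert
        intro D hD _
        refine Set.disjoint_of_subset_left hBsub ?_
        exact Set.disjoint_sdiff_left.mono_right (Set.subset_sUnion_of_mem hD)
      have : insert B 𝒟 ⊆ 𝒟 := h𝒟max.2 hins (Set.subset_insert B 𝒟)
      have hBmem : B ∈ 𝒟 := this (Set.mem_insert B 𝒟)
      have : B ⊆ ∅ := fun x hx =>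
        (hBsub hx).2 (Set.mem_sUnion.2 ⟨B, hBmem, hx⟩)
      exact hBI (hdown ∅ B hempty this)
  · intro c hc hchain
    refine ⟨⋃₀ c, ⟨?_, ?_⟩, fun s hs => Set.subset_sUnion_of_mem hs⟩
    · exact Set.sUnion_subset fun d hd => (hc hd).1
    · intro A hA B hB hAB
      obtain ⟨dA, hdA, hAdA⟩ := hA
      obtain ⟨dB, hdB, hBdB⟩ := hB
      rcases hchain.total hdA hdB with h | h
      · exact (hc hdB).2 (h hAdA) hBdB hAB
      · exact (hc hdA).2 hAdA (h hBdB) hAB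
end

section
/- Let I be an ideal on a set X and A a family of subsets of X with |σA| < 2^{ω₁}, where σA is the family of countable unions of members of A. Then A is I-Lindelöf if and only if A is I-ccc. -/
/-- if |σ𝒜| < 2^{ω₁}, then 𝒜 is I-Lindelöf iff 𝒜 is I-ccc. -/
theorem lindelof_iff_ccc_of_small_sigma {X : Type*} (I 𝒜 : Set (Set X))
    (hne : I.Nonempty)
    (hdown : ∀ A B : Set X, A ∈ I → B ⊆ A → B ∈ I)
    (hunion : ∀ A B : Set X, A ∈ I → B ∈ I → A ∪ B ∈ I)
    (hsmall : Cardinal.mk {S : Set X | ∃ ℬ : Set (Set X), ℬ ⊆ 𝒜 ∧ ℬ.Countable ∧ S = ⋃₀ ℬ}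
      < 2 ^ Cardinal.aleph 1) :
    (∀ S : Set X, ∃ ℱ : Set (Set X), ℱ ⊆ {A ∈ 𝒜 | A ⊆ S} ∧ ℱ.Countable ∧
        ∀ B ∈ 𝒜, B ⊆ S \ ⋃₀ ℱ → B ∈ I) ↔
    (∀ 𝒟 : Set (Set X), 𝒟 ⊆ 𝒜 \ I → 𝒟.PairwiseDisjoint id → 𝒟.Countable) := by
  have hempty : (∅ : Set X) ∈ I := by
    obtain ⟨A, hA⟩ := hne
    exact hdown A ∅ hA (Set.empty_subset A)
  constructor
  · -- Lindelöf → ccc, uses hsmall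
    intro hLind 𝒟 h𝒟 hdisj
    by_contra hunc
    rw [Cardinal.countable_iff_lt_aleph_one, not_lt] at hunc
    -- get an injection from a type of size ℵ₁ into 𝒟
    set K := (Cardinal.aleph 1).out with hK
    have hmkK : Cardinal.mk K = Cardinal.aleph 1 := Cardinal.mk_out _
    rw [← hmkK, Cardinal.le_def] at hunc
    obtain ⟨f⟩ := hunc
    set D : K → Set X := fun k => (f k : Set X) with hD
    have hDinj : Function.Injective D := by
      intro a b hab
      exact f.injective (Subtype.ext hab)
    have hDmem : ∀ k, D k ∈ 𝒜 \ I := fun k => h𝒟 (f k).2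
    -- choose Lindelöf covers for each union over a subset of K
    have key : ∀ T : Set K, ∃ ℱ : Set (Set X),
        ℱ ⊆ {A ∈ 𝒜 | A ⊆ ⋃ k ∈ T, D k} ∧ ℱ.Countable ∧
        ∀ B ∈ 𝒜, B ⊆ (⋃ k ∈ T, D k) \ ⋃₀ ℱ → B ∈ I :=
      fun T => hLind _
    choose ℱ hℱsub hℱcnt hℱI using key
    set σ := {S : Set X | ∃ ℬ : Set (Set X), ℬ ⊆ 𝒜 ∧ ℬ.Countable ∧ S = ⋃₀ ℬ} with hσ
    have hU : ∀ T : Set K, ⋃₀ ℱ T ∈ σ := by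
      intro T
      exact ⟨ℱ T, fun A hA => (hℱsub T hA).1, hℱcnt T, rfl⟩
    set g : Set K → σ := fun T => ⟨⋃₀ ℱ T, hU T⟩ with hg
    have hginj : ¬ Function.Injective g := by
      intro hinj
      have := Cardinal.mk_le_of_injective hinj
      rw [Cardinal.mk_set, hmkK] at this
      exact absurd (lt_of_le_of_lt this hsmall) (lt_irrefl _)
    rw [Function.not_injective_iff] at hginj
    obtain ⟨T, T', hUeq, hTne⟩ := hginj
    have hUeq' : ⋃₀ ℱ T = ⋃₀ ℱ T' := congrArg Subtype.val hUeq
    -- a symmetric helper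
    have main : ∀ T T' : Set K, ⋃₀ ℱ T = ⋃₀ ℱ T' → ∀ k ∈ T, k ∈ T' := by
      intro T T' heq k hkT
      by_contra hkT'
      -- D k is disjoint from S T'
      have hdisj' : Disjoint (D k) (⋃ k' ∈ T', D k') := by
        rw [Set.disjoint_iUnion₂_right]
        intro k' hk'
        have hne' : k ≠ k' := fun h => hkT' (h ▸ hk')
        exact hdisj (f k).2 (f k').2 (fun h => hne' (hDinj h))
      have hsubU : ⋃₀ ℱ T' ⊆ ⋃ k' ∈ T', D k' := by
        intro x hx
        obtain ⟨A, hA, hxA⟩ := hx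
        exact (hℱsub T' hA).2 hxA
      have : D k ⊆ (⋃ k' ∈ T, D k') \ ⋃₀ ℱ T := by
        intro x hx
        refine ⟨Set.mem_biUnion hkT hx, fun hxU => ?_⟩
        rw [heq] at hxU
        exact hdisj'.ne_of_mem hx (hsubU hxU) rfl
      exact (hDmem k).2 (hℱI T (D k) (hDmem k).1 this)
    apply hTne
    ext k
    exact ⟨fun h => main T T' hUeq' k h, fun h => main T' T hUeq'.symm k h⟩
  · -- ccc → Lindelöf, via Zorn
    intro hccc S
    set P := {𝒟 : Set (Set X) | 𝒟 ⊆ {A ∈ 𝒜 | A ⊆ S} ∧ (∀ A ∈ 𝒟, A ∉ I) ∧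
      𝒟.PairwiseDisjoint id} with hP
    obtain ⟨𝒟, h𝒟P, hmax⟩ : ∃ m, Maximal (· ∈ P) m := by
      apply zorn_subset
      intro c hc hchain
      refine ⟨⋃₀ c, ⟨?_, ?_, ?_⟩, fun s hs => Set.subset_sUnion_of_mem hs⟩
      · intro A hA
        obtain ⟨s, hs, hAs⟩ := hA
        exact (hc hs).1 hAs
      · intro A hA
        obtain ⟨s, hs, hAs⟩ := hA
        exact (hc hs).2.1 A hAs
      · intro A hA B hB hAB
        obtain ⟨s, hs, hAs⟩ := hA
        obtain ⟨t, ht, hBt⟩ := hB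
        rcases hchain.total hs ht with h | h
        · exact (hc ht).2.2 (h hAs) hBt hAB
        · exact (hc hs).2.2 hAs (h hBt) hAB
    refine ⟨𝒟, h𝒟P.1, ?_, ?_⟩
    · exact hccc 𝒟 (fun A hA => ⟨(h𝒟P.1 hA).1, h𝒟P.2.1 A hA⟩) h𝒟P.2.2
    · intro B hB hBsub
      by_contra hBI
      have hBS : B ⊆ S := hBsub.trans (Set.diff_subset)
      have hBd : ∀ A ∈ 𝒟, Disjoint A B := by
        intro A hA
        refine Set.disjoint_left.mpr fun x hxA hxB => ?_
        exact (hBsub hxB).2 ⟨A, hA, hxA⟩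
      have hmem : insert B 𝒟 ∈ P := by
        refine ⟨?_, ?_, ?_⟩
        · intro A hA
          rcases hA with rfl | hA
          · exact ⟨hB, hBS⟩
          · exact h𝒟P.1 hA
        · intro A hA
          rcases hA with rfl | hA
          · exact hBI
          · exact h𝒟P.2.1 A hA
        · apply h𝒟P.2.2.insert
          intro A hA _
          exact (hBd A hA).symm
      have : B ∈ 𝒟 := by
        have h2 : insert B 𝒟 ⊆ 𝒟 := hmax hmem (Set.subset_insert B 𝒟)
        exact h2 (Set.mem_insert B 𝒟)
      have hBempty : B = ∅ := by
        by_contra hBne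
        obtain ⟨x, hx⟩ := Set.nonempty_iff_ne_empty.mpr hBne
        exact (hBsub hx).2 ⟨B, this, hx⟩
      exact hBI (hBempty ▸ hempty)
end

section
/- Assuming the Continuum Hypothesis, in every uncountable Polish space X there exists a non-Borel subset S ⊆ X such that both S and X \ S are (Borel, countable)-saturated: every Borel set meeting S (respectively X \ S) in an uncountable set contains an uncountable Borel subset of S (respectively of X \ S). -/
/-!
Enumerate the Borel sets as `e i`, `i < ω₁` (this is where CH is used), and build by transfinite
recursion an increasing family of pairs `(S i, T i)` of disjoint Borel sets which are meagre when
pulled back along a fixed continuous injection `f` of the Cantor space into `X`. At stage `i`,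
add to `S` an uncountable closed subset of `e i \ T` and to `T` one of `e i \ S`, whenever these
differences are uncountable; avoiding the image of a countable dense set makes these closed sets
meagre. Then add one point outside `S ∪ T` (it exists by Baire's theorem), to `T` if it lies in
`e i` and to `S` otherwise, so that `S ≠ e i` in the end. Countable unions keep the pairs meagre;
`S = ⋃ i, S i` is not Borel, and both `S` and its complement, which contains `⋃ i, T i`, are
saturated.
-/

open Set Filter Topology Cardinal

theorem disjoint_iSup_fst_iSup_snd {α ι : Type*} [Order.Frame α] {F : ι → α × α}
    (hF : Directed (· ≤ ·) F) (h : ∀ i, Disjoint (F i).1 (F i).2) :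
    Disjoint (⨆ i, F i).1 (⨆ i, F i).2 := by
  simp only [Prod.fst_iSup, Prod.snd_iSup, iSup_disjoint_iff, disjoint_iSup_iff]
  intro i j
  obtain ⟨k, hik, hjk⟩ := hF i j
  exact (h k).mono hjk.1 hik.2

section Construction

variable {X : Type*} [MeasurableSpace X]

def BorelCountableSaturated (S : Set X) : Prop :=
  ∀ B : Set X, MeasurableSet B → ¬(B ∩ S).Countable →
    ∃ C : Set X, MeasurableSet C ∧ C ⊆ B ∩ S ∧ ¬C.Countable

variable (l : Filter X)

/-- The sets `s` with `sᶜ ∈ l` play the role of null sets. -/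
structure HasUncountableNullSubsets : Prop where
  compl_singleton_mem : ∀ x, {x}ᶜ ∈ l
  exists_subset_compl_mem :
    ∀ B, MeasurableSet B → ¬B.Countable → ∃ C ⊆ B, MeasurableSet C ∧ ¬C.Countable ∧ Cᶜ ∈ l

variable {l}

theorem HasUncountableNullSubsets.exists_subset_compl_mem_of_measurableSet
    (hl : HasUncountableNullSubsets l) {B : Set X} (hB : MeasurableSet B) :
    ∃ C ⊆ B, MeasurableSet C ∧ (¬B.Countable → ¬C.Countable) ∧ Cᶜ ∈ l := by
  by_cases hB' : B.Countable
  · exact ⟨∅, empty_subset B, .empty, fun h => absurd hB' h, by simp⟩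
  · obtain ⟨C, hCB, hC, hC', hCl⟩ := hl.exists_subset_compl_mem B hB hB'
    exact ⟨C, hCB, hC, fun _ => hC', hCl⟩

namespace BorelCountableSaturated

variable (l)

structure Admissible (p : Set X × Set X) : Prop where
  measurableSet_fst : MeasurableSet p.1
  measurableSet_snd : MeasurableSet p.2
  compl_fst_mem : p.1ᶜ ∈ l
  compl_snd_mem : p.2ᶜ ∈ l
  disjoint : Disjoint p.1 p.2

structure IsStep (E : Set X) (p q : Set X × Set X) : Prop where
  le : p ≤ q
  saturate_fst : ¬(E \ p.2).Countable → ∃ C, MeasurableSet C ∧ C ⊆ E ∩ q.1 ∧ ¬C.Countable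
  saturate_snd : ¬(E \ q.1).Countable → ∃ C, MeasurableSet C ∧ C ⊆ E ∩ q.2 ∧ ¬C.Countable
  diagonal : (E ∩ q.2 ∪ q.1 \ E).Nonempty

variable {l}

theorem Admissible.iSup [CountableInterFilter l] {ι : Type*} [Countable ι] {F : ι → Set X × Set X}
    (hF : Directed (· ≤ ·) F) (h : ∀ i, Admissible l (F i)) : Admissible l (⨆ i, F i) where
  measurableSet_fst := by
    simpa only [Prod.fst_iSup, iSup_eq_iUnion] using .iUnion fun i => (h i).measurableSet_fst
  measurableSet_snd := by
    simpa only [Prod.snd_iSup, iSup_eq_iUnion] using .iUnion fun i => (h i).measurableSet_snd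
  compl_fst_mem := by
    simpa only [Prod.fst_iSup, iSup_eq_iUnion, compl_iUnion] using
      countable_iInter_mem.2 fun i => (h i).compl_fst_mem
  compl_snd_mem := by
    simpa only [Prod.snd_iSup, iSup_eq_iUnion, compl_iUnion] using
      countable_iInter_mem.2 fun i => (h i).compl_snd_mem
  disjoint := disjoint_iSup_fst_iSup_snd hF fun i => (h i).disjoint

theorem Admissible.exists_isStep [MeasurableSingletonClass X] [NeBot l] (hl : HasUncountableNullSubsets l) {p : Set X × Set X}
    (hp : Admissible l p) {E : Set X} (hE : MeasurableSet E) :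
    ∃ q, Admissible l q ∧ IsStep E p q := by
  obtain ⟨P, hPE, hP, hPunc, hPl⟩ :=
    hl.exists_subset_compl_mem_of_measurableSet (hE.diff hp.measurableSet_snd)
  obtain ⟨Q, hQE, hQ, hQunc, hQl⟩ :=
    hl.exists_subset_compl_mem_of_measurableSet (hE.diff (hp.measurableSet_fst.union hP))
  obtain ⟨x, hx⟩ := Filter.nonempty_of_mem <|
    inter_mem (inter_mem (inter_mem hp.compl_fst_mem hPl) hp.compl_snd_mem) hQl
  refine ⟨(p.1 ∪ P ∪ ({x} \ E), p.2 ∪ Q ∪ ({x} ∩ E)), ⟨?_, ?_, ?_, ?_, ?_⟩, ⟨?_, ?_, ?_, ?_⟩⟩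
  · exact (hp.measurableSet_fst.union hP).union ((measurableSet_singleton x).diff hE)
  · exact (hp.measurableSet_snd.union hQ).union ((measurableSet_singleton x).inter hE)
  · simp only [compl_union]
    exact inter_mem (inter_mem hp.compl_fst_mem hPl)
      (mem_of_superset (hl.compl_singleton_mem x) (compl_subset_compl.2 sdiff_subset))
  · simp only [compl_union]
    exact inter_mem (inter_mem hp.compl_snd_mem hQl)
      (mem_of_superset (hl.compl_singleton_mem x) (compl_subset_compl.2 inter_subset_left))
  · have hp' := disjoint_left.1 hp.disjoint
    rw [disjoint_left]
    rintro y ((hy | hy) | ⟨rfl, hyE⟩) ((hy' | hy') | ⟨hyx, hyE'⟩)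
    exacts [hp' hy hy', (hQE hy').2 (.inl hy), hx.1.1.1 (hyx ▸ hy), (hPE hy).2 hy',
      (hQE hy').2 (.inr hy), hx.1.1.2 (hyx ▸ hy), hx.1.2 hy', hx.2 hy', hyE hyE']
  · exact ⟨subset_union_left.trans subset_union_left, subset_union_left.trans subset_union_left⟩
  · exact fun h => ⟨P, hP, fun y hy => ⟨(hPE hy).1, .inl (.inr hy)⟩, hPunc h⟩
  · refine fun h => ⟨Q, hQ, fun y hy => ⟨(hQE hy).1, .inl (.inr hy)⟩, hQunc fun hc => h ?_⟩
    exact hc.mono (sdiff_subset_sdiff_right subset_union_left)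
  · refine ⟨x, ?_⟩
    by_cases hxE : x ∈ E
    · exact .inl ⟨hxE, .inr ⟨rfl, hxE⟩⟩
    · exact .inr ⟨.inr ⟨rfl, hxE⟩, hxE⟩

variable {ι : Type*} [LinearOrder ι] [WellFoundedLT ι] (l) (e : ι → Set X)

noncomputable def stage : ι → Set X × Set X :=
  WellFoundedLT.fix fun i F => Classical.epsilon fun q =>
    Admissible l q ∧ IsStep (e i) (⨆ j : Iio i, F j j.2) q

theorem stage_spec (i : ι) :
    (∃ q, Admissible l q ∧ IsStep (e i) (⨆ j : Iio i, stage l e j) q) →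
      Admissible l (stage l e i) ∧ IsStep (e i) (⨆ j : Iio i, stage l e j) (stage l e i) := by
  rw [stage, WellFoundedLT.fix_eq]
  exact Classical.epsilon_spec

variable {l e} [MeasurableSingletonClass X] [NeBot l]

theorem stage_isStep_of_admissible (hl : HasUncountableNullSubsets l)
    (he : ∀ i, MeasurableSet (e i)) {i : ι} (hi : Admissible l (⨆ j : Iio i, stage l e j)) :
    Admissible l (stage l e i) ∧ IsStep (e i) (⨆ j : Iio i, stage l e j) (stage l e i) :=
  stage_spec l e i (hi.exists_isStep hl (he i))

theorem stage_le_stage (hl : HasUncountableNullSubsets l) (he : ∀ i, MeasurableSet (e i))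
    {j k : ι} (hk : Admissible l (⨆ m : Iio k, stage l e m)) (hjk : j ≤ k) :
    stage l e j ≤ stage l e k := by
  rcases hjk.lt_or_eq with hjk | rfl
  · exact (le_iSup (fun m : Iio k => stage l e m) ⟨j, hjk⟩).trans
      (stage_isStep_of_admissible hl he hk).2.le
  · exact le_rfl

variable [CountableInterFilter l]

theorem admissible_iSup_stage (hl : HasUncountableNullSubsets l) (he : ∀ i, MeasurableSet (e i))
    (hι : ∀ i : ι, (Iio i).Countable) (i : ι) : Admissible l (⨆ j : Iio i, stage l e j) := by
  induction i using WellFoundedLT.induction with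
  | _ i ih =>
    have : Countable (Iio i) := (hι i).to_subtype
    have hmono : Monotone fun j : Iio i => stage l e j :=
      fun j k hjk => stage_le_stage hl he (ih k k.2) hjk
    exact .iSup hmono.directed_le fun j => (stage_isStep_of_admissible hl he (ih j j.2)).1

theorem exists_not_measurableSet (hl : HasUncountableNullSubsets l)
    (he : ∀ i, MeasurableSet (e i)) (hsurj : ∀ B, MeasurableSet B → ∃ i, e i = B)
    (hι : ∀ i : ι, (Iio i).Countable) :
    ∃ S : Set X, ¬MeasurableSet S ∧ BorelCountableSaturated S ∧ BorelCountableSaturated Sᶜ := by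
  have hadm := admissible_iSup_stage hl he hι
  have hstep i := stage_isStep_of_admissible hl he (hadm i)
  have hmono : Monotone (stage l e) := fun j k => stage_le_stage hl he (hadm k)
  set F := ⨆ i, stage l e i
  have hle i : stage l e i ≤ F := le_iSup _ i
  have hdisj : Disjoint F.1 F.2 :=
    disjoint_iSup_fst_iSup_snd hmono.directed_le fun i => (hstep i).1.disjoint
  refine ⟨F.1, fun hS => ?_, fun B hB hBS => ?_, fun B hB hBS => ?_⟩
  · obtain ⟨i, hi⟩ := hsurj _ hS
    obtain ⟨x, hx | hx⟩ := (hstep i).2.diagonal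
    · exact disjoint_left.1 hdisj (hi ▸ hx.1) ((hle i).2 hx.2)
    · exact hx.2 (hi ▸ (hle i).1 hx.1)
  · obtain ⟨i, rfl⟩ := hsurj B hB
    have hsub : e i ∩ F.1 ⊆ e i \ (⨆ j : Iio i, stage l e j).2 := fun y hy =>
      ⟨hy.1, fun hy' => disjoint_left.1 hdisj hy.2 (((hstep i).2.le.trans (hle i)).2 hy')⟩
    obtain ⟨C, hC, hCsub, hCunc⟩ := (hstep i).2.saturate_fst fun h => hBS (h.mono hsub)
    exact ⟨C, hC, hCsub.trans (inter_subset_inter_right _ (hle i).1), hCunc⟩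
  · obtain ⟨i, rfl⟩ := hsurj B hB
    have hsub : e i ∩ F.1ᶜ ⊆ e i \ (stage l e i).1 :=
      fun y hy => ⟨hy.1, fun hy' => hy.2 ((hle i).1 hy')⟩
    obtain ⟨C, hC, hCsub, hCunc⟩ := (hstep i).2.saturate_snd fun h => hBS (h.mono hsub)
    exact ⟨C, hC, hCsub.trans
      (inter_subset_inter_right _ ((hle i).2.trans hdisj.subset_compl_left)), hCunc⟩

end BorelCountableSaturated

end Construction

section CantorSpace

/-- Changing the `n`-th coordinate of `y` gives points `≠ y` converging to `y`. -/
instance {α : Type*} [TopologicalSpace α] [Nontrivial α] : PerfectSpace (ℕ → α) := by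
  refine perfectSpace_iff_forall_not_isolated.2 fun y => ?_
  choose z hz using fun n => exists_ne (y n)
  let u : ℕ → ℕ → α := fun n => Function.update y n (z n)
  have hu : Tendsto u atTop (𝓝 y) := tendsto_pi_nhds.2 fun k =>
    tendsto_atTop_of_eventually_const (i₀ := k + 1) fun n hn => by
      simp [u, Function.update_of_ne (show k ≠ n by omega)]
  refine mem_closure_iff_nhdsWithin_neBot.1 (mem_closure_of_tendsto hu (.of_forall fun n h => ?_))
  exact hz n (by simpa [u] using congrFun h n)

theorem Set.Countable.isMeagre {X : Type*} [TopologicalSpace X] [T1Space X] [PerfectSpace X]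
    {s : Set X} (hs : s.Countable) : IsMeagre s := by
  rw [← biUnion_of_singleton s]
  refine isMeagre_biUnion hs fun x _ => IsNowhereDense.isMeagre ?_
  rw [IsNowhereDense, closure_singleton, interior_singleton]

theorem not_countable_range_of_injective {X : Type*} {f : (ℕ → Bool) → X}
    (hf : Function.Injective f) : ¬(range f).Countable := by
  have : Uncountable (ℕ → Bool) := by
    rw [← aleph0_lt_mk_iff]
    simpa using cantor ℵ₀
  exact fun h => not_countable_univ (by simpa using h.preimage hf)

end CantorSpace

theorem MeasurableSet.exists_nat_bool_injection_of_not_countable {X : Type*} [TopologicalSpace X]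
    [PolishSpace X] [MeasurableSpace X] [BorelSpace X] {B : Set X} (hB : MeasurableSet B)
    (hB' : ¬B.Countable) :
    ∃ f : (ℕ → Bool) → X, range f ⊆ B ∧ Continuous f ∧ Function.Injective f := by
  obtain ⟨t, ht, htp, hBt, -⟩ := hB.isClopenable
  obtain ⟨f, hfB, hf, hinj⟩ :=
    @IsClosed.exists_nat_bool_injection_of_not_countable X t htp B hBt hB'
  exact ⟨f, hfB, continuous_le_rng ht hf, hinj⟩

section CantorResidual

variable {X : Type*} {f : (ℕ → Bool) → X}

instance : NeBot (map f (residual (ℕ → Bool))) :=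
  map_neBot (hf := ⟨fun h => not_isMeagre_of_isOpen (X := ℕ → Bool) isOpen_univ univ_nonempty
    (by rw [IsMeagre, h]; exact mem_bot)⟩)

theorem compl_mem_map_residual_of_countable (hf : Function.Injective f) {s : Set X}
    (hs : s.Countable) : sᶜ ∈ map f (residual (ℕ → Bool)) :=
  (hs.preimage hf).isMeagre

theorem compl_mem_map_residual_of_isClosed [TopologicalSpace X] (hf : Continuous f)
    {D : Set (ℕ → Bool)} (hD : Dense D) {K : Set X} (hK : IsClosed K)
    (hKD : Disjoint K (f '' D)) : Kᶜ ∈ map f (residual (ℕ → Bool)) := by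
  have hKD' : D ⊆ (f ⁻¹' K)ᶜ := fun x hx hxK => hKD.ne_of_mem hxK (mem_image_of_mem f hx) rfl
  refine IsNowhereDense.isMeagre (s := f ⁻¹' K) ?_
  rw [(hK.preimage hf).isNowhereDense_iff, interior_eq_empty_iff_dense_compl]
  exact hD.mono hKD'

theorem hasUncountableNullSubsets_map_residual [TopologicalSpace X] [PolishSpace X]
    [MeasurableSpace X] [BorelSpace X] (hf : Continuous f) (hinj : Function.Injective f) :
    HasUncountableNullSubsets (map f (residual (ℕ → Bool))) where
  compl_singleton_mem x := compl_mem_map_residual_of_countable hinj (countable_singleton x)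
  exists_subset_compl_mem B hB hB' := by
    obtain ⟨D, hDc, hD⟩ := TopologicalSpace.exists_countable_dense (ℕ → Bool)
    have hBD : ¬(B \ f '' D).Countable := fun h => hB' (h.of_sdiff (hDc.image f))
    obtain ⟨g, hgB, hg, hginj⟩ :=
      (hB.diff (hDc.image f).measurableSet).exists_nat_bool_injection_of_not_countable hBD
    have hK : IsClosed (range g) := (isCompact_range hg).isClosed
    refine ⟨range g, hgB.trans sdiff_subset, hK.measurableSet,
      not_countable_range_of_injective hginj, compl_mem_map_residual_of_isClosed hf hD hK ?_⟩
    exact disjoint_of_subset_left hgB disjoint_sdiff_left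

end CantorResidual

theorem continuum_eq_aleph_one_transfer (h : continuum.{v} = ℵ₁) : continuum.{u} = ℵ₁ := by
  apply lift_injective.{v}
  simpa using congrArg lift.{u} h

theorem countable_Iio_toType_ord_aleph_one (i : (ℵ₁ : Cardinal.{u}).ord.ToType) :
    (Iio i).Countable :=
  le_aleph0_iff_set_countable.1 (lt_aleph_one_iff.1 (by simpa using mk_Iio_lt i (by simp)))

theorem MeasurableSpace.exists_surjective_measurableSet {X ι : Type u} [MeasurableSpace X]
    [MeasurableSpace.CountablyGenerated X] (h : 𝔠 ≤ #ι) :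
    ∃ e : ι → Set X, (∀ i, MeasurableSet (e i)) ∧ ∀ B, MeasurableSet B → ∃ i, e i = B := by
  obtain ⟨b, hbc, hb⟩ := MeasurableSpace.CountablyGenerated.isCountablyGenerated (α := X)
  have hcard : #{s : Set X | MeasurableSet s} ≤ #ι := by
    rw [hb]
    exact (cardinal_measurableSet_le_continuum (hbc.le_aleph0.trans aleph0_le_continuum)).trans h
  obtain ⟨g⟩ := hcard
  have : Nonempty {s : Set X | MeasurableSet s} := ⟨⟨∅, .empty⟩⟩
  refine ⟨fun i => (Function.invFun g i).1, fun i => (Function.invFun g i).2, fun B hB => ?_⟩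
  obtain ⟨i, hi⟩ := Function.invFun_surjective g.injective ⟨B, hB⟩
  exact ⟨i, congrArg Subtype.val hi⟩

/-- under CH, every uncountable Polish space contains a non-Borel set S
such that both S and its complement are (Borel, countable)-saturated. -/
theorem exists_nonBorel_saturated_of_CH {X : Type*} [TopologicalSpace X] [PolishSpace X]
    [MeasurableSpace X] [BorelSpace X] [Uncountable X]
    (CH : Cardinal.continuum = Cardinal.aleph 1) :
    ∃ S : Set X, ¬MeasurableSet S ∧
      (∀ B : Set X, MeasurableSet B → ¬(B ∩ S).Countable →
        ∃ C : Set X, MeasurableSet C ∧ C ⊆ B ∩ S ∧ ¬C.Countable) ∧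
      (∀ B : Set X, MeasurableSet B → ¬(B ∩ Sᶜ).Countable →
        ∃ C : Set X, MeasurableSet C ∧ C ⊆ B ∩ Sᶜ ∧ ¬C.Countable) := by
  obtain ⟨f, -, hf, hinj⟩ :=
    isClosed_univ.exists_nat_bool_injection_of_not_countable (not_countable_univ (α := X))
  obtain ⟨e, he, hsurj⟩ := MeasurableSpace.exists_surjective_measurableSet (X := X)
    (ι := (ℵ₁ : Cardinal).ord.ToType) (by simp [continuum_eq_aleph_one_transfer CH])
  exact BorelCountableSaturated.exists_not_measurableSet
    (hasUncountableNullSubsets_map_residual hf hinj) he hsurj countable_Iio_toType_ord_aleph_one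
end

section
/- Every multiplicative Polishable family A of subsets of a Hausdorff topological space X is I-winning for every ideal I on X: the player C has a winning strategy in the Set-Cover game on (A \ I, A). -/
/-!
Fix for every `A ∈ 𝒜` a complete metric space `P_A`, a continuous surjection `F_A : P_A → A`
and a countable base of `P_A` whose images lie in `𝒜`. Player C remembers, for every earlier
move `S_k`, an open set `B_k ⊆ P_{S_k}` (initially `P_{S_k}` itself) with the current move
inside `F_{S_k}(B_k)`. At stage `n` C answers with all sets `⋂_k F_{S_k}(d_k)`, each `d_k ⊆ B_k`
basic of diameter `≤ 2^{1-n}`: countably many, and members of `𝒜` by multiplicativity. When S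
plays inside one of them, C replaces every `B_k` by `d_k`. For fixed `k` the `B_k` then shrink
to a point of the complete space `P_{S_k}`, so points `x_n ∈ S_n` converge to a point of `S_k`;
in a Hausdorff space these limits coincide, giving a point of `⋂ S_n`. The `x_n` exist because
`∅ ∈ I`.
-/

/-- Player C has a winning strategy in the Set-Cover game `Game(𝒜 \ I, 𝒜)`:
a strategy assigns to each finite history of S-moves a countable cover by members
of 𝒜 of the last move, and any admissible infinite run has nonempty intersection. -/
def CWins {X : Type*} (𝒜 I : Set (Set X)) : Prop :=
  ∃ σ : List (Set X) → Set (Set X),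
    (∀ l : List (Set X), ∀ S ∈ 𝒜 \ I,
      (σ (l ++ [S])).Countable ∧ σ (l ++ [S]) ⊆ 𝒜 ∧ S ⊆ ⋃₀ σ (l ++ [S])) ∧
    (∀ f : ℕ → Set X, (∀ n, f n ∈ 𝒜 \ I) →
      (∀ n : ℕ, ∃ C ∈ σ (List.ofFn fun i : Fin (n + 1) => f i), f (n + 1) ⊆ C) →
      (⋂ n, f n).Nonempty)

/-- A family 𝒜 of subsets of a topological space is Polishable if each member is the
continuous image of a Polish space carrying a base whose images lie in 𝒜. -/
def Polishable {X : Type*} [TopologicalSpace X] (𝒜 : Set (Set X)) : Prop :=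
  ∀ A ∈ 𝒜, ∃ (P : Type) (_ : TopologicalSpace P) (_ : PolishSpace P) (f : P → X),
    Continuous f ∧ Set.range f = A ∧
    ∃ ℬ : Set (Set P), TopologicalSpace.IsTopologicalBasis ℬ ∧ ∀ B ∈ ℬ, f '' B ∈ 𝒜

open Set Filter Topology TopologicalSpace Metric

theorem List.Forall₂.exists_mem_left {α β : Type*} {r : α → β → Prop} {l₁ : List α}
    {l₂ : List β} (h : List.Forall₂ r l₁ l₂) {b : β} (hb : b ∈ l₂) : ∃ a ∈ l₁, r a b := by
  induction h with
  | nil => cases hb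
  | cons hab _ ih =>
    rcases List.mem_cons.1 hb with rfl | hb
    · exact ⟨_, List.mem_cons_self, hab⟩
    · obtain ⟨a, ha, hab'⟩ := ih hb
      exact ⟨a, List.mem_cons_of_mem _ ha, hab'⟩

theorem List.Forall₂.getD {α β : Type*} {r : α → β → Prop} {l₁ : List α} {l₂ : List β}
    (h : List.Forall₂ r l₁ l₂) {k : ℕ} (hk : k < l₁.length) (d₁ : α) (d₂ : β) :
    r (l₁.getD k d₁) (l₂.getD k d₂) := by
  rw [List.getD_eq_getElem _ _ hk, List.getD_eq_getElem _ _ (h.length_eq ▸ hk)]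
  simpa using h.get hk (h.length_eq ▸ hk)

theorem exists_tendsto_of_mem_image_of_ediam_le {P Y : Type*} [PseudoEMetricSpace P]
    [CompleteSpace P] [TopologicalSpace Y] {F : P → Y} (hF : Continuous F) {B : ℕ → Set P}
    (hB : Antitone B) {C : ENNReal} (hC : C ≠ ⊤) (hdiam : ∀ j, ediam (B j) ≤ C / 2 ^ j)
    {y : ℕ → Y} (hy : ∀ j, y j ∈ F '' B j) : ∃ q, Tendsto y atTop (𝓝 (F q)) := by
  choose p hpB hpy using hy
  have hp : CauchySeq p := cauchySeq_of_edist_le_geometric_two C hC fun j =>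
    (edist_le_ediam_of_mem (hpB j) (hB j.le_succ (hpB (j + 1)))).trans (hdiam j)
  obtain ⟨q, hq⟩ := cauchySeq_tendsto_of_complete hp
  refine ⟨q, ?_⟩
  simpa only [Function.comp_def, hpy] using (hF.tendsto q).comp hq

namespace Polishable

variable {X : Type*} [TopologicalSpace X] {𝒜 : Set (Set X)}

structure Rep (𝒜 : Set (Set X)) (A : Set X) where
  P : Type
  [metricSpace : MetricSpace P]
  [completeSpace : CompleteSpace P]
  F : P → X
  continuous_F : Continuous F
  range_F : range F = A
  basis : Set (Set P)
  countable_basis : basis.Countable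
  isTopologicalBasis : IsTopologicalBasis basis
  image_mem : ∀ B ∈ basis, F '' B ∈ 𝒜

attribute [instance] Rep.metricSpace Rep.completeSpace

theorem nonempty_rep (hPol : Polishable 𝒜) {A : Set X} (hA : A ∈ 𝒜) : Nonempty (Rep 𝒜 A) := by
  obtain ⟨P, _, _, F, hF, hrange, ℬ, hℬ, hℬ𝒜⟩ := hPol A hA
  let := upgradeIsCompletelyMetrizable P
  obtain ⟨ℬ', hℬ'ℬ, hℬ'c, hℬ'⟩ := hℬ.exists_countable
  exact ⟨⟨P, F, hF, hrange, ℬ', hℬ'c, hℬ', fun B hB => hℬ𝒜 B (hℬ'ℬ hB)⟩⟩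

section Strategy

variable (R : ∀ A : 𝒜, Rep 𝒜 A)

/-- A cell `⟨A, B⟩` stands for the part `F_A '' B` of `A` that C still tracks; C's state is the
list of cells of all moves of S so far. -/
abbrev Cell : Type _ := Σ A : 𝒜, Opens (R A).P

variable {R}

namespace Cell

def image (c : Cell R) : Set X := (R c.1).F '' c.2

def refine (c : Cell R) (n : ℕ) : Set (Cell R) :=
  Sigma.mk c.1 '' {d | (d : Set (R c.1).P) ∈ (R c.1).basis ∧ d ≤ c.2 ∧
    ediam (d : Set (R c.1).P) ≤ 2 / 2 ^ n}

theorem countable_refine (c : Cell R) (n : ℕ) : (c.refine n).Countable :=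
  (((R c.1).countable_basis.preimage SetLike.coe_injective).mono fun _ hd => hd.1).image _

theorem image_mem_of_mem_refine {c c' : Cell R} {n : ℕ} (h : c' ∈ c.refine n) :
    c'.image ∈ 𝒜 := by
  obtain ⟨d, hd, rfl⟩ := h
  exact (R c.1).image_mem _ hd.1

theorem image_subset_iUnion_refine (c : Cell R) (n : ℕ) :
    c.image ⊆ ⋃ c' ∈ c.refine n, c'.image := by
  rintro _ ⟨p, hp, rfl⟩
  have hε : (0 : ENNReal) < 1 / 2 ^ n := by simp
  obtain ⟨d, hd, hpd, hdU⟩ := (R c.1).isTopologicalBasis.exists_subset_of_mem_open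
    (show p ∈ (c.2 : Set _) ∩ eball p (1 / 2 ^ n) from ⟨hp, mem_eball_self hε⟩)
    (c.2.isOpen.inter isOpen_eball)
  refine mem_biUnion (x := ⟨c.1, ⟨d, (R c.1).isTopologicalBasis.isOpen hd⟩⟩)
    ⟨_, ⟨hd, fun q hq => (hdU hq).1, ?_⟩, rfl⟩ ⟨p, hpd, rfl⟩
  calc ediam d ≤ ediam (eball p (1 / 2 ^ n)) := ediam_mono fun q hq => (hdU hq).2
    _ ≤ 2 * (1 / 2 ^ n) := ediam_eball_le
    _ = 2 / 2 ^ n := mul_one_div _ _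

theorem image_top (S : 𝒜) : Cell.image (⟨S, ⊤⟩ : Cell R) = S := by
  simp [image, (R S).range_F]

end Cell

def cellInter (t : List (Cell R)) : Set X := ⋂ c ∈ t, c.image

theorem mem_cellInter_cons {x : X} {c : Cell R} {s : List (Cell R)} :
    x ∈ cellInter (c :: s) ↔ x ∈ c.image ∧ x ∈ cellInter s := by
  simp [cellInter]

theorem cellInter_append (s t : List (Cell R)) :
    cellInter (s ++ t) = cellInter s ∩ cellInter t := by
  simp [cellInter, iInter_or, iInter_inter_distrib]

def refinements (n : ℕ) (s : List (Cell R)) : Set (List (Cell R)) :=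
  {t | List.Forall₂ (fun c c' => c' ∈ c.refine n) s t}

def cover (s : List (Cell R)) : Set (Set X) := cellInter '' refinements s.length s

theorem countable_refinements (n : ℕ) (s : List (Cell R)) : (refinements n s).Countable := by
  set U := ⋃ c ∈ s, c.refine n
  have hU : U.Countable := s.finite_toSet.countable.biUnion fun c _ => c.countable_refine n
  have := hU.to_subtype
  refine (countable_range (List.map ((↑) : U → Cell R))).mono fun t ht => ?_
  lift t to List U using fun c' hc' => by
    obtain ⟨c, hc, hcc'⟩ := List.Forall₂.exists_mem_left ht hc'
    exact mem_biUnion hc hcc'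
  exact mem_range_self t

theorem cover_subset (hmult : ∀ ℱ : Set (Set X), ℱ.Finite → ℱ ⊆ 𝒜 → ⋂₀ ℱ ∈ 𝒜)
    (s : List (Cell R)) : cover s ⊆ 𝒜 := by
  rintro _ ⟨t, ht, rfl⟩
  rw [show cellInter t = ⋂₀ (Cell.image '' {c | c ∈ t}) from (sInter_image _ _).symm]
  refine hmult _ (t.finite_toSet.image _) ?_
  rintro _ ⟨c', hc', rfl⟩
  obtain ⟨c, -, hcc'⟩ := List.Forall₂.exists_mem_left ht hc'
  exact Cell.image_mem_of_mem_refine hcc'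

theorem exists_mem_refinements (n : ℕ) {x : X} :
    ∀ {s : List (Cell R)}, x ∈ cellInter s → ∃ t ∈ refinements n s, x ∈ cellInter t
  | [], _ => ⟨[], List.Forall₂.nil, by simp [cellInter]⟩
  | c :: s, hx => by
    obtain ⟨hxc, hxs⟩ := mem_cellInter_cons.1 hx
    obtain ⟨c', hc', hxc'⟩ := mem_iUnion₂.1 (c.image_subset_iUnion_refine n hxc)
    obtain ⟨t, ht, hxt⟩ := exists_mem_refinements n hxs
    exact ⟨c' :: t, .cons hc' ht, mem_cellInter_cons.2 ⟨hxc', hxt⟩⟩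

theorem subset_sUnion_cover {S : Set X} {s : List (Cell R)} (h : S ⊆ cellInter s) :
    S ⊆ ⋃₀ cover s := fun _ hx =>
  let ⟨t, ht, hxt⟩ := exists_mem_refinements s.length (h hx)
  ⟨_, ⟨t, ht, rfl⟩, hxt⟩

open Classical in
/-- If `S` lies in no member of the current cover (impossible in a play that respects the
strategy), the old cells are dropped. -/
noncomputable def step (s : List (Cell R)) (S : 𝒜) : List (Cell R) :=
  (if h : ∃ t ∈ refinements s.length s, ↑S ⊆ cellInter t then h.choose else []) ++ [⟨S, ⊤⟩]

theorem step_eq {s : List (Cell R)} {S : 𝒜}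
    (h : ∃ t ∈ refinements s.length s, ↑S ⊆ cellInter t) :
    ∃ t ∈ refinements s.length s, ↑S ⊆ cellInter t ∧ step s S = t ++ [⟨S, ⊤⟩] :=
  ⟨h.choose, h.choose_spec.1, h.choose_spec.2, by rw [step, dif_pos h]⟩

theorem step_nil (S : 𝒜) : step ([] : List (Cell R)) S = [⟨S, ⊤⟩] := by
  rw [step]
  split_ifs with h
  · rw [List.forall₂_nil_left_iff.1 h.choose_spec.1, List.nil_append]
  · rfl

theorem subset_cellInter_step (s : List (Cell R)) (S : 𝒜) : ↑S ⊆ cellInter (step s S) := by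
  have hS : ↑S ⊆ cellInter [(⟨S, ⊤⟩ : Cell R)] := fun x hx => mem_iInter₂.2 fun c hc => by
    rwa [List.mem_singleton.1 hc, Cell.image_top]
  rw [step]
  split_ifs with h
  · rw [cellInter_append]
    exact subset_inter h.choose_spec.2 hS
  · simpa using hS

variable (R) in
open Classical in
noncomputable def state (l : List (Set X)) : List (Cell R) :=
  l.foldl (fun s S => if hS : S ∈ 𝒜 then step s ⟨S, hS⟩ else s) []

variable (R) in
noncomputable def strategy (l : List (Set X)) : Set (Set X) := cover (state R l)

theorem state_append {S : Set X} (l : List (Set X)) (hS : S ∈ 𝒜) :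
    state R (l ++ [S]) = step (state R l) ⟨S, hS⟩ := by
  simp [state, hS]

theorem strategy_append_spec (hmult : ∀ ℱ : Set (Set X), ℱ.Finite → ℱ ⊆ 𝒜 → ⋂₀ ℱ ∈ 𝒜)
    {S : Set X} (l : List (Set X)) (hS : S ∈ 𝒜) :
    (strategy R (l ++ [S])).Countable ∧ strategy R (l ++ [S]) ⊆ 𝒜 ∧
      S ⊆ ⋃₀ strategy R (l ++ [S]) := by
  rw [strategy, state_append l hS]
  exact ⟨(countable_refinements _ _).image _, cover_subset hmult _,
    subset_sUnion_cover (subset_cellInter_step (state R l) ⟨S, hS⟩)⟩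

theorem exists_mem_tendsto_of_refine {A : 𝒜} {c : ℕ → Cell R} (h0 : c 0 = ⟨A, ⊤⟩)
    {m : ℕ → ℕ} (hm : ∀ j, j ≤ m j) (hc : ∀ j, c (j + 1) ∈ (c j).refine (m j))
    {y : ℕ → X} (hy : ∀ j, y j ∈ (c (j + 1)).image) :
    ∃ z ∈ (A : Set X), Tendsto y atTop (𝓝 z) := by
  have hsnd : ∀ j, ∃ B : Opens (R A).P, c j = ⟨A, B⟩ := by
    intro j
    induction j with
    | zero => exact ⟨⊤, h0⟩
    | succ j ih =>
      obtain ⟨B, hB⟩ := ih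
      have hcj := hc j
      rw [hB] at hcj
      obtain ⟨d, -, hd⟩ := hcj
      exact ⟨d, hd.symm⟩
  choose B hB using hsnd
  have hBsucc : ∀ j, (B (j + 1) : Set (R A).P) ∈ (R A).basis ∧ B (j + 1) ≤ B j ∧
      ediam (B (j + 1) : Set (R A).P) ≤ 2 / 2 ^ (m j) := by
    intro j
    have := hc j
    rw [hB (j + 1), hB j] at this
    exact sigma_mk_injective.mem_set_image.1 this
  obtain ⟨q, hq⟩ := exists_tendsto_of_mem_image_of_ediam_le (R A).continuous_F
    (B := fun j => (B (j + 1) : Set (R A).P))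
    (antitone_nat_of_succ_le fun j => (hBsucc (j + 1)).2.1) (C := 2) (by simp)
    (fun j => (hBsucc j).2.2.trans
      (ENNReal.div_le_div_left (pow_le_pow_right₀ one_le_two (hm j)) _))
    (y := y) fun j => by
      have h := hy j
      rw [hB (j + 1)] at h
      exact h
  exact ⟨_, (R A).range_F.subset (mem_range_self q), hq⟩

section Run

variable {f : ℕ → Set X}

variable (R) in
def RespectsStrategy (f : ℕ → Set X) : Prop :=
  ∀ n, ∃ C ∈ strategy R (List.ofFn fun i : Fin (n + 1) => f i), f (n + 1) ⊆ C

variable (R) in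
noncomputable def runState (f : ℕ → Set X) (n : ℕ) : List (Cell R) :=
  state R (List.ofFn fun i : Fin (n + 1) => f i)

theorem runState_zero (hf0 : f 0 ∈ 𝒜) : runState R f 0 = [⟨⟨f 0, hf0⟩, ⊤⟩] := by
  have hl : (List.ofFn fun i : Fin 1 => f i) = [] ++ [f 0] := rfl
  rw [runState, hl, state_append _ hf0]
  exact step_nil _

theorem runState_succ (hfA : ∀ n, f n ∈ 𝒜) (n : ℕ) :
    runState R f (n + 1) = step (runState R f n) ⟨f (n + 1), hfA (n + 1)⟩ := by
  have hl : (List.ofFn fun i : Fin (n + 2) => f i) =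
      (List.ofFn fun i : Fin (n + 1) => f i) ++ [f (n + 1)] := by
    simp only [List.ofFn_succ', List.concat_eq_append, Fin.val_castSucc, Fin.val_last]
  rw [runState, hl, state_append _ (hfA (n + 1))]
  rfl

theorem exists_runState_succ (hfA : ∀ n, f n ∈ 𝒜)
    (hfollow : RespectsStrategy R f)
    (n : ℕ) :
    ∃ t ∈ refinements (runState R f n).length (runState R f n), f (n + 1) ⊆ cellInter t ∧
      runState R f (n + 1) = t ++ [⟨⟨f (n + 1), hfA (n + 1)⟩, ⊤⟩] := by
  obtain ⟨_, ⟨t, ht, rfl⟩, hft⟩ := hfollow n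
  rw [runState_succ hfA]
  exact step_eq (S := ⟨f (n + 1), hfA (n + 1)⟩) ⟨t, ht, hft⟩

theorem length_runState (hfA : ∀ n, f n ∈ 𝒜)
    (hfollow : RespectsStrategy R f)
    (n : ℕ) : (runState R f n).length = n + 1 := by
  induction n with
  | zero => rw [runState_zero (hfA 0)]; rfl
  | succ n ih =>
    obtain ⟨t, ht, -, heq⟩ := exists_runState_succ hfA hfollow n
    rw [heq, List.length_append, ← List.Forall₂.length_eq ht, ih]
    rfl

theorem getD_runState_self (hfA : ∀ n, f n ∈ 𝒜)
    (hfollow : RespectsStrategy R f)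
    (n : ℕ) (d : Cell R) : (runState R f n).getD n d = ⟨⟨f n, hfA n⟩, ⊤⟩ := by
  cases n with
  | zero => rw [runState_zero (hfA 0)]; rfl
  | succ n =>
    obtain ⟨t, ht, -, heq⟩ := exists_runState_succ hfA hfollow n
    have ht_len : t.length = n + 1 :=
      (List.Forall₂.length_eq ht).symm.trans (length_runState hfA hfollow n)
    rw [heq, List.getD_append_right _ _ _ _ ht_len.le, ht_len, Nat.sub_self]
    rfl

theorem getD_runState_succ (hfA : ∀ n, f n ∈ 𝒜)
    (hfollow : RespectsStrategy R f)
    {k n : ℕ} (hkn : k ≤ n) (d : Cell R) :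
    (runState R f (n + 1)).getD k d ∈ ((runState R f n).getD k d).refine (n + 1) ∧
      f (n + 1) ⊆ ((runState R f (n + 1)).getD k d).image := by
  obtain ⟨t, ht, hft, heq⟩ := exists_runState_succ hfA hfollow n
  have hlen := length_runState hfA hfollow n
  have hk : k < t.length := (List.Forall₂.length_eq ht) ▸ hlen ▸ Nat.lt_succ_of_le hkn
  rw [heq, List.getD_append _ _ _ _ hk]
  refine ⟨hlen ▸ List.Forall₂.getD ht (hlen ▸ Nat.lt_succ_of_le hkn) d d, ?_⟩
  rw [List.getD_eq_getElem _ _ hk]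
  exact hft.trans (biInter_subset_of_mem (List.getElem_mem hk))

theorem exists_mem_tendsto_of_run (hfA : ∀ n, f n ∈ 𝒜)
    (hfollow : RespectsStrategy R f)
    {x : ℕ → X} (hx : ∀ n, x n ∈ f n) (k : ℕ) : ∃ z ∈ f k, Tendsto x atTop (𝓝 z) := by
  let d : Cell R := ⟨⟨f k, hfA k⟩, ⊤⟩
  obtain ⟨z, hz, hlim⟩ := exists_mem_tendsto_of_refine
    (c := fun j => (runState R f (k + j)).getD k d) (getD_runState_self hfA hfollow k d)
    (m := fun j => k + j + 1) (fun j => by omega)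
    (fun j => (getD_runState_succ hfA hfollow (Nat.le_add_right k j) d).1)
    (y := fun j => x (k + j + 1))
    (fun j => (getD_runState_succ hfA hfollow (Nat.le_add_right k j) d).2 (hx _))
  have hshift : (fun j => x (j + (k + 1))) = fun j => x (k + j + 1) := by
    ext j
    congr 1
    omega
  exact ⟨z, hz, (tendsto_add_atTop_iff_nat (k + 1)).1 (hshift ▸ hlim)⟩

theorem iInter_nonempty_of_run [T2Space X] (hfA : ∀ n, f n ∈ 𝒜)
    (hfne : ∀ n, (f n).Nonempty)
    (hfollow : RespectsStrategy R f) :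
    (⋂ n, f n).Nonempty := by
  choose x hx using hfne
  choose z hz hlim using exists_mem_tendsto_of_run hfA hfollow hx
  exact ⟨z 0, mem_iInter.2 fun k => tendsto_nhds_unique (hlim k) (hlim 0) ▸ hz k⟩

end Run

end Strategy

end Polishable

theorem polishable_multiplicative_winning_general {X : Type*} [TopologicalSpace X] [T2Space X]
    (𝒜 : Set (Set X))
    (hmult : ∀ ℱ : Set (Set X), ℱ.Finite → ℱ ⊆ 𝒜 → ⋂₀ ℱ ∈ 𝒜)
    (hPol : Polishable 𝒜)
    (I : Set (Set X)) (hne : I.Nonempty)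
    (hdown : ∀ A B : Set X, A ∈ I → B ⊆ A → B ∈ I) :
    CWins 𝒜 I := by
  obtain ⟨R⟩ : Nonempty (∀ A : 𝒜, Polishable.Rep 𝒜 A) :=
    ⟨fun A => (hPol.nonempty_rep A.2).some⟩
  have hempty : ∅ ∈ I := hdown _ ∅ hne.some_mem (empty_subset _)
  refine ⟨Polishable.strategy R, fun l S hS => Polishable.strategy_append_spec hmult l hS.1,
    fun f hf hfollow => Polishable.iInter_nonempty_of_run (fun n => (hf n).1) ?_ hfollow⟩
  exact fun n => nonempty_iff_ne_empty.2 fun h => (hf n).2 (h ▸ hempty)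

/-- every multiplicative Polishable family on a Hausdorff space is
I-winning for every ideal I. -/
theorem polishable_multiplicative_winning {X : Type*} [TopologicalSpace X] [T2Space X]
    (𝒜 : Set (Set X))
    (hmult : ∀ ℱ : Set (Set X), ℱ.Finite → ℱ ⊆ 𝒜 → ⋂₀ ℱ ∈ 𝒜)
    (hPol : Polishable 𝒜)
    (I : Set (Set X)) (hne : I.Nonempty)
    (hdown : ∀ A B : Set X, A ∈ I → B ⊆ A → B ∈ I)
    (hunion : ∀ A B : Set X, A ∈ I → B ∈ I → A ∪ B ∈ I) :
    CWins 𝒜 I :=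
  polishable_multiplicative_winning_general 𝒜 hmult hPol I hne hdown
end

section
/- Let X be a functionally Hausdorff space with countable network that admits a continuous bijection from a Polish space. Then there exists a countable set C and a continuous injective map g : X → ℝ^C. -/
/-- a functionally Hausdorff space with countable network admitting a
continuous bijection from a Polish space embeds (continuously and injectively) into
ℝ^C for some countable C. -/
theorem exists_countable_injection_into_RC {X : Type*} [TopologicalSpace X]
    (hFH : ∀ x y : X, x ≠ y → ∃ f : X → ℝ, Continuous f ∧ f x ≠ f y)
    (hnet : ∃ N : Set (Set X), N.Countable ∧
      ∀ x : X, ∀ U : Set X, IsOpen U → x ∈ U → ∃ M ∈ N, x ∈ M ∧ M ⊆ U)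
    (hP : ∃ (P : Type) (_ : TopologicalSpace P) (_ : PolishSpace P) (f : P → X),
      Continuous f ∧ Function.Bijective f) :
    ∃ (C : Type), Countable C ∧ ∃ g : X → C → ℝ, Continuous g ∧ Function.Injective g := by
  obtain ⟨N, hNc, hN⟩ := hnet
  -- the set of separable pairs of network elements
  set S : Set (Set X × Set X) :=
    {p | p.1 ∈ N ∧ p.2 ∈ N ∧ ∃ f : X → ℝ, Continuous f ∧ ∀ a ∈ p.1, ∀ b ∈ p.2, f a ≠ f b}
    with hSdef
  have hSc : S.Countable :=
    (hNc.prod hNc).mono (fun p hp => Set.mem_prod.mpr ⟨hp.1, hp.2.1⟩)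
  -- key: any two distinct points lie in a separable pair
  have key : ∀ x y : X, x ≠ y → ∃ p ∈ S, x ∈ p.1 ∧ y ∈ p.2 := by
    intro x y hne
    obtain ⟨f, hf, hfxy⟩ := hFH x y hne
    obtain ⟨t1, t2, ht1, ht2, hx1, hy2, hdisj⟩ := t2_separation hfxy
    obtain ⟨M, hMN, hxM, hMsub⟩ := hN x (f ⁻¹' t1) (ht1.preimage hf) hx1
    obtain ⟨M', hM'N, hyM', hM'sub⟩ := hN y (f ⁻¹' t2) (ht2.preimage hf) hy2
    exact ⟨(M, M'), ⟨hMN, hM'N, f, hf, fun a ha b hb h =>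
      hdisj.ne_of_mem (hMsub ha) (hM'sub hb) h⟩, hxM, hyM'⟩
  by_cases hSne : S.Nonempty
  · obtain ⟨e, he⟩ := hSc.exists_eq_range hSne
    have heS : ∀ n, e n ∈ S := fun n => he ▸ Set.mem_range_self n
    choose F hFc hFsep using fun n : ℕ => (heS n).2.2
    refine ⟨ℕ, inferInstance, fun x n => F n x, continuous_pi fun n => hFc n, ?_⟩
    intro x y hxy
    by_contra hne
    obtain ⟨p, hpS, hxp, hyp⟩ := key x y hne
    obtain ⟨n, rfl⟩ := he ▸ hpS
    exact hFsep n x hxp y hyp (congrFun hxy n)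
  · refine ⟨ℕ, inferInstance, fun _ _ => 0, continuous_const, ?_⟩
    intro x y _
    by_contra hne
    obtain ⟨p, hpS, -, -⟩ := key x y hne
    exact hSne ⟨p, hpS⟩
end

section
/- Let X be a Borel space, i.e., a functionally Hausdorff space admitting a continuous bijection f : P → X from a Polish space P. Then the family of subspaces of X that admit a continuous bijection from some Polish space coincides with the σ-algebra of Borel subsets of X. -/
open TopologicalSpace Set Function

/-- Auxiliary: a functionally Hausdorff continuous image of a second countable space admits
a continuous injection into `ι → ℝ` for a countable `ι`. -/
lemma exists_cont_inj_pi {X : Type*} [TopologicalSpace X]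
    {P : Type} [TopologicalSpace P] [SecondCountableTopology P]
    (hFH : ∀ x y : X, x ≠ y → ∃ f : X → ℝ, Continuous f ∧ f x ≠ f y)
    {f : P → X} (fc : Continuous f) (fs : Function.Surjective f) :
    ∃ (ι : Type) (_ : Countable ι) (e : X → ι → ℝ),
      Continuous e ∧ Function.Injective e := by
  classical
  haveI : Countable (countableBasis P) := (countable_countableBasis P).to_subtype
  set B := countableBasis P with hB
  let Pred : Set P → Set P → (X → ℝ) → Prop := fun U V ψ =>
    Continuous ψ ∧ (∀ p ∈ U, ψ (f p) = 0) ∧ (∀ p ∈ V, ψ (f p) = 1)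
  let h : Set P → Set P → X → ℝ := fun U V =>
    if hex : ∃ ψ, Pred U V ψ then hex.choose else fun _ => 0
  have hcont : ∀ U V, Continuous (h U V) := by
    intro U V
    simp only [h]
    split_ifs with hex
    · exact hex.choose_spec.1
    · exact continuous_const
  refine ⟨B × B, inferInstance, fun x i => h i.1.1 i.2.1 x, ?_, ?_⟩
  · exact continuous_pi fun i => hcont _ _
  · intro x y hxy
    by_contra hne
    obtain ⟨φ, φc, hφ⟩ := hFH x y hne
    set a := φ x
    set b := φ y
    have hab : |b - a| > 0 := abs_pos.2 (sub_ne_zero.2 (Ne.symm hφ))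
    have hden : ∀ z : X, |φ z - a| + |φ z - b| > 0 := by
      intro z
      have : |b - a| ≤ |φ z - a| + |φ z - b| := by
        have := abs_sub (b) (a)
        calc |b - a| = |(φ z - a) - (φ z - b)| := by ring_nf
          _ ≤ |φ z - a| + |φ z - b| := abs_sub _ _
      linarith
    set ψ : X → ℝ := fun z => |φ z - a| / (|φ z - a| + |φ z - b|) with hψ
    have ψc : Continuous ψ := by
      apply Continuous.div
      · exact (φc.sub continuous_const).abs
      · exact ((φc.sub continuous_const).abs.add (φc.sub continuous_const).abs)
      · intro z; exact ne_of_gt (hden z)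
    have ψx : ψ x = 0 := by simp [ψ, a]
    have ψy : ψ y = 1 := by
      simp only [ψ]
      rw [show |φ y - b| = 0 by simp [b], add_zero]
      exact div_self (ne_of_gt (by simpa using hab))
    set ψ' : X → ℝ := fun z => min 1 (max 0 (3 * ψ z - 1)) with hψ'
    have ψ'c : Continuous ψ' := by
      apply Continuous.min continuous_const
      exact Continuous.max continuous_const ((continuous_const.mul ψc).sub continuous_const)
    -- open sets
    have hO0 : IsOpen (f ⁻¹' (ψ ⁻¹' Set.Iio (1/3))) :=
      ((isOpen_Iio).preimage ψc).preimage fc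
    have hO1 : IsOpen (f ⁻¹' (ψ ⁻¹' Set.Ioi (2/3))) :=
      ((isOpen_Ioi).preimage ψc).preimage fc
    obtain ⟨p, hp⟩ := fs x
    obtain ⟨q, hq⟩ := fs y
    have hpmem : p ∈ f ⁻¹' (ψ ⁻¹' Set.Iio (1/3)) := by
      norm_num [Set.mem_preimage, hp, ψx]
    have hqmem : q ∈ f ⁻¹' (ψ ⁻¹' Set.Ioi (2/3)) := by
      norm_num [Set.mem_preimage, hq, ψy]
    obtain ⟨U, hUB, hpU, hUsub⟩ :=
      (isBasis_countableBasis P).exists_subset_of_mem_open hpmem hO0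
    obtain ⟨V, hVB, hqV, hVsub⟩ :=
      (isBasis_countableBasis P).exists_subset_of_mem_open hqmem hO1
    have hex : ∃ ψ₀, Pred U V ψ₀ := by
      refine ⟨ψ', ψ'c, ?_, ?_⟩
      · intro p' hp'
        have : ψ (f p') < 1/3 := hUsub hp'
        have h1 : 3 * ψ (f p') - 1 ≤ 0 := by linarith
        simp only [ψ']
        rw [max_eq_left h1, min_eq_right (by norm_num : (0:ℝ) ≤ 1)]
      · intro q' hq'
        have : (2:ℝ)/3 < ψ (f q') := hVsub hq'
        have h1 : (1:ℝ) ≤ 3 * ψ (f q') - 1 := by linarith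
        simp only [ψ']
        rw [max_eq_right (by linarith), min_eq_left h1]
    have hP : Pred U V (h U V) := by
      simp only [h]
      rw [dif_pos hex]
      exact hex.choose_spec
    have h0 : h U V x = 0 := by rw [← hp]; exact hP.2.1 p hpU
    have h1 : h U V y = 1 := by rw [← hq]; exact hP.2.2 q hqV
    have := congrFun hxy (⟨U, hUB⟩, ⟨V, hVB⟩)
    simp only at this
    rw [h0, h1] at this
    norm_num at this

/-- in a Borel space X (functionally Hausdorff, continuous bijective image
of a Polish space), a subset is a continuous bijective image of a Polish space iff it is
a Borel subset of X. -/
theorem borel_subspace_iff_borel {X : Type*} [TopologicalSpace X]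
    (hFH : ∀ x y : X, x ≠ y → ∃ f : X → ℝ, Continuous f ∧ f x ≠ f y)
    (hX : ∃ (P : Type) (_ : TopologicalSpace P) (_ : PolishSpace P) (f : P → X),
      Continuous f ∧ Function.Bijective f)
    (A : Set X) :
    (∃ (Q : Type) (_ : TopologicalSpace Q) (_ : PolishSpace Q) (g : Q → X),
        Continuous g ∧ Function.Injective g ∧ Set.range g = A) ↔
    @MeasurableSet X (borel X) A := by
  classical
  obtain ⟨P, tP, pP, f, fc, fbij⟩ := hX
  letI mX : MeasurableSpace X := borel X
  haveI bX : BorelSpace X := ⟨rfl⟩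
  letI mP : MeasurableSpace P := borel P
  haveI bP : BorelSpace P := ⟨rfl⟩
  haveI : T2Space X := by
    constructor
    intro x y hxy
    obtain ⟨φ, φc, hφ⟩ := hFH x y hxy
    exact separated_by_continuous φc hφ
  constructor
  · rintro ⟨Q, tQ, pQ, g, gc, ginj, grange⟩
    -- Step 1: f ⁻¹' A is Borel in P.
    letI mQP : MeasurableSpace (Q × P) := borel _
    haveI : BorelSpace (Q × P) := ⟨rfl⟩
    set C : Set (Q × P) := {z | g z.1 = f z.2} with hC
    have hCclosed : IsClosed C :=
      isClosed_eq (gc.comp continuous_fst) (fc.comp continuous_snd)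
    haveI : PolishSpace C := hCclosed.polishSpace
    letI mC : MeasurableSpace C := borel _
    haveI : BorelSpace C := ⟨rfl⟩
    set π : C → P := fun c => c.1.2 with hπ
    have πc : Continuous π := continuous_snd.comp continuous_subtype_val
    have πinj : Function.Injective π := by
      rintro ⟨⟨q1, p1⟩, h1⟩ ⟨⟨q2, p2⟩, h2⟩ hpe
      simp only [π] at hpe
      subst hpe
      have : g q1 = g q2 := by rw [h1, h2]
      exact Subtype.ext (Prod.ext (ginj this) rfl)
    have hrange : Set.range π = f ⁻¹' A := by
      ext p
      constructor
      · rintro ⟨⟨⟨q, p'⟩, hc⟩, rfl⟩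
        simp only [Set.mem_preimage]
        rw [← grange]
        exact ⟨q, hc⟩
      · intro hp
        rw [Set.mem_preimage, ← grange] at hp
        obtain ⟨q, hq⟩ := hp
        exact ⟨⟨⟨q, p⟩, hq⟩, rfl⟩
    have hfA : MeasurableSet (f ⁻¹' A) := by
      rw [← hrange]
      exact (πc.measurableEmbedding πinj).measurableSet_range
    -- Step 2: embed X into a Polish space
    obtain ⟨ι, hι, e, ec, einj⟩ := exists_cont_inj_pi hFH fc fbij.2
    haveI : Countable ι := hι
    letI mZ : MeasurableSpace (ι → ℝ) := borel _
    haveI : BorelSpace (ι → ℝ) := ⟨rfl⟩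
    have efc : Continuous (e ∘ f) := ec.comp fc
    have efinj : Function.Injective (e ∘ f) := einj.comp fbij.1
    have himg : MeasurableSet ((e ∘ f) '' (f ⁻¹' A)) :=
      (efc.measurableEmbedding efinj).measurableSet_image' hfA
    have hAeq : A = e ⁻¹' ((e ∘ f) '' (f ⁻¹' A)) := by
      ext x
      constructor
      · intro hx
        obtain ⟨p, rfl⟩ := fbij.2 x
        exact ⟨p, hx, rfl⟩
      · rintro ⟨p, hp, hep⟩
        have : f p = x := einj hep
        rwa [← this]
    rw [hAeq]
    exact ec.measurable himg
  · intro hA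
    have hfA : MeasurableSet (f ⁻¹' A) := fc.measurable hA
    have hc0 : Continuous (fun q : {p // p ∈ f ⁻¹' A} => f q.1) :=
      fc.comp continuous_subtype_val
    obtain ⟨t', ht'le, ht'polish, hclosed, -⟩ := hfA.isClopenable
    refine ⟨{p // p ∈ f ⁻¹' A}, @instTopologicalSpaceSubtype P _ t',
      @IsClosed.polishSpace P t' ht'polish _ hclosed,
      fun q => f q.1, ?_, ?_, ?_⟩
    · have hsub_le : (@instTopologicalSpaceSubtype P (fun p => p ∈ f ⁻¹' A) t')
          ≤ (@instTopologicalSpaceSubtype P (fun p => p ∈ f ⁻¹' A) tP) :=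
        induced_mono ht'le
      exact continuous_le_dom hsub_le hc0
    · intro q1 q2 hq
      exact Subtype.ext (fbij.1 hq)
    · ext x
      constructor
      · rintro ⟨q, rfl⟩
        exact q.2
      · intro hx
        obtain ⟨p, rfl⟩ := fbij.2 x
        exact ⟨⟨p, hx⟩, rfl⟩
end

section
/- For a Polish space X and a countable ordinal α ≥ 2, the class Π⁰_α(X) is Polishable: for every A ∈ Π⁰_α(X) there exist a Polish space P, a base 𝓑 of P, and a continuous bijection f : P → A such that f[B] ∈ Π⁰_α(X) for every B ∈ 𝓑. -/
/-- The additive Borel class Σ⁰_α of a topological space, by recursion on α. -/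
def Sigma0 (X : Type) [TopologicalSpace X] (α : Ordinal.{0}) : Set (Set X) :=
  {s | IsOpen s} ∪
    {s | ∃ f : ℕ → Set X, (∀ n, ∃ β, ∃ _ : β < α, (f n)ᶜ ∈ Sigma0 X β) ∧ s = ⋃ n, f n}
termination_by α
decreasing_by exact ‹_›

/-- The multiplicative Borel class Π⁰_α. -/
def Pi0 (X : Type) [TopologicalSpace X] (α : Ordinal.{0}) : Set (Set X) :=
  {s | sᶜ ∈ Sigma0 X α}

open TopologicalSpace Topology

section Lemmas

variable {X : Type} [TopologicalSpace X] {α β δ : Ordinal.{0}} {s t : Set X}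

lemma sigma0_def (α : Ordinal.{0}) : Sigma0 X α = {s | IsOpen s} ∪
    {s | ∃ f : ℕ → Set X, (∀ n, ∃ β, ∃ _ : β < α, (f n)ᶜ ∈ Sigma0 X β) ∧ s = ⋃ n, f n} := by
  rw [Sigma0]

lemma isOpen_mem_sigma0 (h : IsOpen s) : s ∈ Sigma0 X α := by
  rw [sigma0_def]; exact Or.inl h

lemma mem_sigma0_iUnion {f : ℕ → Set X} (h : ∀ n, ∃ β, β < α ∧ (f n)ᶜ ∈ Sigma0 X β) :
    (⋃ n, f n) ∈ Sigma0 X α := by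
  rw [sigma0_def]
  exact Or.inr ⟨f, fun n => (h n).elim fun β hβ => ⟨β, hβ.1, hβ.2⟩, rfl⟩

lemma sigma0_mono (h : α ≤ δ) : Sigma0 X α ⊆ Sigma0 X δ := by
  intro s hs
  rw [sigma0_def] at hs
  rcases hs with hs | ⟨f, hf, rfl⟩
  · exact isOpen_mem_sigma0 hs
  · exact mem_sigma0_iUnion fun n => (hf n).elim fun β hβ => ⟨β, lt_of_lt_of_le hβ.1 h, hβ.2⟩

lemma mem_sigma0_of_compl (h : sᶜ ∈ Sigma0 X β) (hβ : β < δ) : s ∈ Sigma0 X δ := by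
  have : s = ⋃ _ : ℕ, s := (Set.iUnion_const s).symm
  rw [this]
  exact mem_sigma0_iUnion fun _ => ⟨β, hβ, h⟩

lemma isClosed_mem_sigma0 (hδ : 0 < δ) (h : IsClosed s) : s ∈ Sigma0 X δ :=
  mem_sigma0_of_compl (isOpen_mem_sigma0 h.isOpen_compl) hδ

lemma sigma0_rep (hδ : 1 < δ) (hs : s ∈ Sigma0 X δ) :
    ∃ f : ℕ → Set X, (∀ n, ∃ β, β < δ ∧ (f n)ᶜ ∈ Sigma0 X β) ∧ s = ⋃ n, f n := by
  rw [sigma0_def] at hs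
  rcases hs with hs | ⟨f, hf, rfl⟩
  · exact ⟨fun _ => s, fun _ => ⟨1, hδ, isClosed_mem_sigma0 zero_lt_one hs.isClosed_compl⟩,
      (Set.iUnion_const s).symm⟩
  · exact ⟨f, fun n => (hf n).elim fun β hβ => ⟨β, hβ.1, hβ.2⟩, rfl⟩

lemma sigma0_iUnion_mem (hδ : 1 < δ) {S : ℕ → Set X} (h : ∀ n, S n ∈ Sigma0 X δ) :
    (⋃ n, S n) ∈ Sigma0 X δ := by
  choose f hf hSf using fun n => sigma0_rep hδ (h n)
  let e : ℕ × ℕ ≃ ℕ := Denumerable.eqv (ℕ × ℕ)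
  have : (⋃ n, S n) = ⋃ k, f (e.symm k).1 (e.symm k).2 := by
    ext x
    simp only [Set.mem_iUnion]
    constructor
    · rintro ⟨n, hx⟩
      rw [hSf n] at hx
      obtain ⟨m, hm⟩ := Set.mem_iUnion.1 hx
      exact ⟨e (n, m), by simpa using hm⟩
    · rintro ⟨k, hk⟩
      refine ⟨(e.symm k).1, ?_⟩
      rw [hSf]
      exact Set.mem_iUnion.2 ⟨(e.symm k).2, hk⟩
  rw [this]
  exact mem_sigma0_iUnion fun k => hf _ _

lemma mem_pi0_iff : s ∈ Pi0 X α ↔ sᶜ ∈ Sigma0 X α := Iff.rfl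

lemma pi0_mono (h : α ≤ δ) : Pi0 X α ⊆ Pi0 X δ := fun _ hs => sigma0_mono h hs

lemma isClosed_mem_pi0 (h : IsClosed s) : s ∈ Pi0 X α := isOpen_mem_sigma0 h.isOpen_compl

lemma isOpen_mem_pi0 (hα : 0 < α) (h : IsOpen s) : s ∈ Pi0 X α :=
  isClosed_mem_sigma0 hα h.isClosed_compl

lemma mem_pi0_of_sigma0 (hβ : β < α) (h : s ∈ Sigma0 X β) : s ∈ Pi0 X α :=
  mem_sigma0_of_compl (by rw [compl_compl]; exact h) hβ

lemma pi0_iInter (hα : 1 < α) {E : ℕ → Set X} (h : ∀ n, E n ∈ Pi0 X α) :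
    (⋂ n, E n) ∈ Pi0 X α := by
  have : (⋂ n, E n)ᶜ = ⋃ n, (E n)ᶜ := by rw [Set.compl_iInter]
  rw [mem_pi0_iff, this]
  exact sigma0_iUnion_mem hα h

lemma pi0_inter (hα : 1 < α) (hs : s ∈ Pi0 X α) (ht : t ∈ Pi0 X α) : s ∩ t ∈ Pi0 X α := by
  have : s ∩ t = ⋂ n : ℕ, (if n = 0 then s else t) := by
    ext x
    simp only [Set.mem_inter_iff, Set.mem_iInter]
    constructor
    · rintro ⟨h1, h2⟩ n; split <;> assumption
    · intro h; exact ⟨by simpa using h 0, by simpa using h 1⟩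
  rw [this]
  exact pi0_iInter hα fun n => by split <;> assumption

end Lemmas

/-- The Polishability property of a set. -/
def Good (α : Ordinal.{0}) {X : Type} [TopologicalSpace X] (A : Set X) : Prop :=
  ∃ (P : Type) (_ : TopologicalSpace P) (_ : PolishSpace P) (f : P → X),
    Continuous f ∧ Function.Injective f ∧ Set.range f = A ∧
    ∃ ℬ : Set (Set P), TopologicalSpace.IsTopologicalBasis ℬ ∧
      ∀ B ∈ ℬ, f '' B ∈ Pi0 X α

section Good

variable {X : Type} [TopologicalSpace X] [PolishSpace X] {α : Ordinal.{0}}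

lemma good_open (hα : 0 < α) {U : Set X} (hU : IsOpen U) : Good α U := by
  refine ⟨U, inferInstance, hU.polishSpace, Subtype.val, continuous_subtype_val,
    Subtype.val_injective, Subtype.range_coe, {V | IsOpen V}, isTopologicalBasis_opens, ?_⟩
  intro B hB
  exact isOpen_mem_pi0 hα (hU.isOpenMap_subtype_val B hB)

lemma good_closed (hα : 1 < α) {C : Set X} (hC : IsClosed C) : Good α C := by
  refine ⟨C, inferInstance, hC.polishSpace, Subtype.val, continuous_subtype_val,
    Subtype.val_injective, Subtype.range_coe,
    (Set.preimage Subtype.val) '' {V | IsOpen V},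
    isTopologicalBasis_opens.isInducing IsInducing.subtypeVal, ?_⟩
  rintro B ⟨V, hV, rfl⟩
  rw [Subtype.image_preimage_coe]
  exact pi0_inter hα (isClosed_mem_pi0 hC) (isOpen_mem_pi0 (zero_lt_one.trans hα) hV)

lemma good_iInter (hα : 1 < α) {g : ℕ → Set X} (hg : ∀ n, Good α (g n))
    (hint : (⋂ n, g n) ∈ Pi0 X α) : Good α (⋂ n, g n) := by
  choose P tP pP f hfc hfi hfr ℬ hℬ himg using hg
  letI : ∀ n, TopologicalSpace (P n) := tP
  haveI : ∀ n, PolishSpace (P n) := pP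
  let E : Set (∀ n, P n) := ⋂ n, {p | f n (p n) = f 0 (p 0)}
  have hE : IsClosed E := isClosed_iInter fun n =>
    isClosed_eq ((hfc n).comp (continuous_apply n)) ((hfc 0).comp (continuous_apply 0))
  haveI : PolishSpace E := hE.polishSpace
  have hmemE : ∀ p : ∀ n, P n, p ∈ E ↔ ∀ n, f n (p n) = f 0 (p 0) := by
    intro p; simp [E, Set.mem_iInter]
  let F : E → X := fun p => f 0 (p.1 0)
  have hFc : Continuous F := (hfc 0).comp ((continuous_apply 0).comp continuous_subtype_val)
  have hFval : ∀ (p : E) (n : ℕ), f n (p.1 n) = F p := fun p n => (hmemE p.1).1 p.2 n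
  have hFi : Function.Injective F := by
    intro p q h
    apply Subtype.ext; funext n
    apply hfi n
    rw [hFval p n, hFval q n, h]
  have hFr : Set.range F = ⋂ n, g n := by
    ext x
    simp only [Set.mem_range, Set.mem_iInter]
    constructor
    · rintro ⟨p, rfl⟩ n
      rw [← hfr n]
      exact ⟨p.1 n, hFval p n⟩
    · intro hx
      have : ∀ n, ∃ y : P n, f n y = x := fun n => by
        have := hx n; rw [← hfr n] at this; exact this
      choose p hp using this
      exact ⟨⟨p, (hmemE p).2 fun n => (hp n).trans (hp 0).symm⟩, hp 0⟩
  refine ⟨E, inferInstance, inferInstance, F, hFc, hFi, hFr, ?_⟩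
  refine ⟨(Set.preimage (Subtype.val : E → ∀ n, P n)) ''
    { S | ∃ (U : ∀ n, Set (P n)) (Fs : Finset ℕ),
      (∀ i, i ∈ Fs → U i ∈ ℬ i) ∧ S = (Fs : Set ℕ).pi U },
    (isTopologicalBasis_pi hℬ).isInducing IsInducing.subtypeVal, ?_⟩
  rintro B ⟨S, ⟨U, Fs, hU, rfl⟩, rfl⟩
  have himage : F '' (Subtype.val ⁻¹' (Fs : Set ℕ).pi U) =
      ⋂ n, ((if n ∈ Fs then f n '' U n else Set.univ) ∩ ⋂ m, g m) := by
    ext x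
    simp only [Set.mem_image, Set.mem_preimage, Set.mem_pi, Set.mem_iInter, Set.mem_inter_iff]
    constructor
    · rintro ⟨p, hp, rfl⟩ n
      refine ⟨?_, ?_⟩
      · split
        · next hn => exact ⟨p.1 n, hp n (Finset.mem_coe.mpr hn), hFval p n⟩
        · trivial
      · intro m; rw [← hfr m]; exact ⟨p.1 m, hFval p m⟩
    · intro hx
      have hxg : x ∈ ⋂ m, g m := Set.mem_iInter.2 fun m => (hx 0).2 m
      rw [← hFr] at hxg
      obtain ⟨p, rfl⟩ := hxg
      refine ⟨p, ?_, rfl⟩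
      intro n hn
      have := (hx n).1
      rw [if_pos (Finset.mem_coe.mp hn)] at this
      obtain ⟨u, hu, hux⟩ := this
      have : u = p.1 n := hfi n (hux.trans (hFval p n).symm)
      exact this ▸ hu
  rw [himage]
  refine pi0_iInter hα fun n => pi0_inter hα ?_ hint
  split
  · next hn => exact himg n (U n) (hU n hn)
  · exact isClosed_mem_pi0 isClosed_univ

omit [PolishSpace X] in
lemma good_iUnion_disjoint {g : ℕ → Set X} (hg : ∀ n, Good α (g n))
    (hdisj : ∀ m n, m ≠ n → g m ∩ g n = ∅) : Good α (⋃ n, g n) := by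
  choose P tP pP f hfc hfi hfr ℬ hℬ himg using hg
  letI : ∀ n, TopologicalSpace (P n) := tP
  haveI : ∀ n, PolishSpace (P n) := pP
  refine ⟨Σ n, P n, inferInstance, inferInstance, fun x => f x.1 x.2,
    continuous_sigma hfc, ?_, ?_, ⋃ n, (fun u => Sigma.mk n '' u) '' ℬ n,
    TopologicalSpace.IsTopologicalBasis.sigma hℬ, ?_⟩
  · rintro ⟨m, p⟩ ⟨n, q⟩ h
    dsimp at h
    by_cases hmn : m = n
    · subst hmn
      exact congrArg (Sigma.mk m) (hfi m h)
    · exfalso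
      have h1 : f m p ∈ g m := hfr m ▸ Set.mem_range_self p
      have h2 : f m p ∈ g n := h ▸ (hfr n ▸ Set.mem_range_self q)
      have := hdisj m n hmn
      exact absurd (Set.mem_inter h1 h2) (by rw [this]; exact Set.notMem_empty _)
  · rw [Set.range_sigma_eq_iUnion_range]
    exact Set.iUnion_congr hfr
  · rintro B hB
    simp only [Set.mem_iUnion, Set.mem_image] at hB
    obtain ⟨n, u, hu, rfl⟩ := hB
    rw [Set.image_image]
    exact himg n u hu

/-- From Polishability of the Σ⁰ levels below δ we get Polishability of Π⁰_δ sets. -/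
lemma good_of_pi (hα : 1 < α) {δ : Ordinal.{0}} (hδ : δ ≤ α)
    (IH : ∀ ε, ε < δ → ∀ T ∈ Sigma0 X ε, Good α T) {A : Set X} (hA : A ∈ Pi0 X δ) :
    Good α A := by
  have hA' : Aᶜ ∈ Sigma0 X δ := hA
  rw [sigma0_def] at hA'
  rcases hA' with h | ⟨C, hC, hEq⟩
  · exact good_closed hα (isOpen_compl_iff.mp h)
  · have hAeq : A = ⋂ n, (C n)ᶜ := by
      rw [← compl_compl A, hEq, Set.compl_iUnion]
    rw [hAeq]
    apply good_iInter hα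
    · intro n
      obtain ⟨ε, hε, hCn⟩ := hC n
      exact IH ε hε _ hCn
    · rw [← hAeq]
      exact pi0_mono hδ hA

/-- Main induction: every set in a Σ⁰ level below α is Polishable. -/
lemma sigma0_good (hα : 1 < α) :
    ∀ β, β < α → ∀ S ∈ Sigma0 X β, Good α S := by
  intro β
  induction β using Ordinal.induction with
  | h β IH =>
  intro hβα S hS
  rw [sigma0_def] at hS
  rcases hS with h | ⟨D, hD, rfl⟩
  · exact good_open (zero_lt_one.trans hα) h
  choose γ hγβ hDc using hD
  set gs : ℕ → ℕ → Set X := fun m n =>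
    if n = 0 then D m else if n - 1 < m then (D (n - 1))ᶜ else Set.univ with hgs
  set D' : ℕ → Set X := fun m => ⋂ n, gs m n with hD'
  have hD'sub : ∀ m, D' m ⊆ D m := by
    intro m x hx
    have := Set.mem_iInter.1 hx 0
    simpa [hgs] using this
  have hD'subc : ∀ m k, k < m → D' m ⊆ (D k)ᶜ := by
    intro m k hk x hx
    have := Set.mem_iInter.1 hx (k + 1)
    simpa [hgs, hk] using this
  have hD'good : ∀ m, Good α (D' m) := by
    intro m
    apply good_iInter hα
    · intro n
      rcases Nat.eq_zero_or_pos n with hn | hn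
      · subst hn
        simp only [hgs, if_pos rfl]
        exact good_of_pi hα (le_of_lt ((hγβ m).trans hβα))
          (fun ε hε T hT => IH ε (hε.trans (hγβ m)) ((hε.trans (hγβ m)).trans hβα) T hT)
          (hDc m)
      · have hn0 : n ≠ 0 := Nat.pos_iff_ne_zero.mp hn
        simp only [hgs, if_neg hn0]
        split
        · exact IH (γ (n - 1)) (hγβ _) ((hγβ _).trans hβα) _ (hDc (n - 1))
        · exact good_open (zero_lt_one.trans hα) isOpen_univ
    · show (⋂ n, gs m n) ∈ Pi0 X α
      apply pi0_iInter hα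
      intro n
      rcases Nat.eq_zero_or_pos n with hn | hn
      · subst hn
        simp only [hgs, if_pos rfl]
        exact pi0_mono (le_of_lt ((hγβ m).trans hβα)) (hDc m)
      · have hn0 : n ≠ 0 := Nat.pos_iff_ne_zero.mp hn
        simp only [hgs, if_neg hn0]
        split
        · exact mem_sigma0_of_compl (by rw [compl_compl]; exact hDc (n - 1))
            ((hγβ _).trans hβα)
        · exact isClosed_mem_pi0 isClosed_univ
  have hdisj : ∀ m n, m ≠ n → D' m ∩ D' n = ∅ := by
    intro m n hmn
    rcases lt_or_gt_of_ne hmn with h | h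
    · apply Set.eq_empty_of_forall_notMem
      rintro x ⟨h1, h2⟩
      exact hD'subc n m h h2 (hD'sub m h1)
    · apply Set.eq_empty_of_forall_notMem
      rintro x ⟨h1, h2⟩
      exact hD'subc m n h h1 (hD'sub n h2)
  have hUnion : (⋃ n, D n) = ⋃ m, D' m := by
    apply Set.Subset.antisymm
    · intro x hx
      obtain ⟨n, hn⟩ := Set.mem_iUnion.1 hx
      have hex : ∃ m, x ∈ D m := ⟨n, hn⟩
      haveI : DecidablePred fun n => x ∈ D n := Classical.decPred _
      refine Set.mem_iUnion.2 ⟨Nat.find hex, ?_⟩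
      apply Set.mem_iInter.2
      intro j
      rcases Nat.eq_zero_or_pos j with hj | hj
      · subst hj; simpa [hgs] using Nat.find_spec hex
      · have hj0 : j ≠ 0 := Nat.pos_iff_ne_zero.mp hj
        simp only [hgs, if_neg hj0]
        split
        · next hlt => exact Nat.find_min hex hlt
        · trivial
    · exact Set.iUnion_mono hD'sub
  rw [hUnion]
  exact good_iUnion_disjoint hD'good hdisj

end Good

/-- for a Polish space X and 2 ≤ α < ω₁, the class Π⁰_α(X) is Polishable:
each member is a continuous bijective image of a Polish space carrying a base whose
images are in Π⁰_α(X). -/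
theorem pi0_polishable (X : Type) [TopologicalSpace X] [PolishSpace X]
    (α : Ordinal.{0}) (hα2 : 2 ≤ α) (hα : α < (Cardinal.aleph 1).ord)
    (A : Set X) (hA : A ∈ Pi0 X α) :
    ∃ (P : Type) (_ : TopologicalSpace P) (_ : PolishSpace P) (f : P → X),
      Continuous f ∧ Function.Injective f ∧ Set.range f = A ∧
      ∃ ℬ : Set (Set P), TopologicalSpace.IsTopologicalBasis ℬ ∧
        ∀ B ∈ ℬ, f '' B ∈ Pi0 X α := by
  have hα1 : (1 : Ordinal.{0}) < α := lt_of_lt_of_le one_lt_two hα2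
  exact good_of_pi hα1 le_rfl (sigma0_good hα1) hA
end

section
/- Let I be a σ-ideal on a set X, let J ⊆ I be a point-finite family with |J| ≤ 𝔠, and let ξ : J → 𝔅 be an injection into a subset 𝔅 ⊆ 2^ω of cardinality 𝔠 containing no uncountable compact subsets; define J_s = ξ⁻¹[2^ω_s] for s ∈ 2^{<ω}. Then for any set S ⊆ X with S ∩ ⋃J ∉ I, the set T = {t ∈ 2^{<ω} : S ∩ ⋃J_t ∉ I} is a perfect subtree of 2^{<ω}: it is nonempty and every element of T has two incomparable extensions in T. -/
/-!
`T` is a tree because `s ↦ ⋃J_s` is antitone. For splitting: if no two incomparable nodes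
of `T` extend `t`, then every `J ∈ 𝒥` with `ξ J ∈ 2^ω_t` that meets `S` outside the null set
`G = ⋃ {S ∩ ⋃J_s : S ∩ ⋃J_s ∈ I}` has all its restrictions `ξ J ↾ n` in `T`; these
restrictions form a chain above `t`, so all such `ξ J` coincide and, `ξ` being injective, there
is at most one such `J`. Hence `S ∩ ⋃J_t` is covered by `G` and one member of `𝒥 ⊆ I`, so it
lies in `I`.
-/

/-- The set of branches of the Cantor space 2^ω extending a finite binary sequence s. -/
def bcylinder (s : List Bool) : Set (ℕ → Bool) :=
  {x | ∀ i : Fin s.length, x i = s.get i}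

structure IsSigmaIdeal {X : Type*} (I : Set (Set X)) : Prop where
  nonempty : I.Nonempty
  mem_of_subset : ∀ A B : Set X, A ∈ I → B ⊆ A → B ∈ I
  iUnion_nat_mem : ∀ f : ℕ → Set X, (∀ n, f n ∈ I) → (⋃ n, f n) ∈ I

namespace IsSigmaIdeal

variable {X : Type*} {I : Set (Set X)}

theorem empty_mem (hI : IsSigmaIdeal I) : ∅ ∈ I :=
  let ⟨A, hA⟩ := hI.nonempty
  hI.mem_of_subset A ∅ hA (Set.empty_subset A)

theorem iUnion_mem {ι : Type*} [Countable ι] (hI : IsSigmaIdeal I) {f : ι → Set X}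
    (hf : ∀ i, f i ∈ I) : (⋃ i, f i) ∈ I := by
  rcases isEmpty_or_nonempty ι with hι | hι
  · simpa only [Set.iUnion_of_empty] using hI.empty_mem
  · obtain ⟨g, hg⟩ := exists_surjective_nat ι
    rw [← hg.iUnion_comp f]
    exact hI.iUnion_nat_mem _ fun n => hf (g n)

theorem sUnion_mem (hI : IsSigmaIdeal I) {𝒦 : Set (Set X)} (hc : 𝒦.Countable)
    (hsub : 𝒦 ⊆ I) : ⋃₀ 𝒦 ∈ I := by
  have := hc.to_subtype
  rw [Set.sUnion_eq_iUnion]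
  exact hI.iUnion_mem fun J => hsub J.2

end IsSigmaIdeal

def branchPrefix (y : ℕ → Bool) (n : ℕ) : List Bool := List.ofFn fun i : Fin n => y i

@[simp] theorem length_branchPrefix (y : ℕ → Bool) (n : ℕ) : (branchPrefix y n).length = n :=
  List.length_ofFn

theorem bcylinder_nil : bcylinder [] = Set.univ :=
  Set.eq_univ_of_forall fun _ i => i.elim0

theorem bcylinder_anti {s t : List Bool} (h : s <+: t) : bcylinder t ⊆ bcylinder s := by
  intro y hy i
  rw [hy ⟨i, i.isLt.trans_le h.length_le⟩]
  exact (h.getElem i.isLt).symm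

theorem mem_bcylinder_branchPrefix (y : ℕ → Bool) (n : ℕ) : y ∈ bcylinder (branchPrefix y n) := by
  intro i
  change y i = (branchPrefix y n)[i.1]
  simp [branchPrefix]

theorem prefix_branchPrefix {y : ℕ → Bool} {s : List Bool} (hy : y ∈ bcylinder s) {n : ℕ}
    (hn : s.length ≤ n) : s <+: branchPrefix y n := by
  refine List.prefix_iff_getElem.2 ⟨by simpa using hn, fun i hi => ?_⟩
  simpa [branchPrefix] using (hy ⟨i, hi⟩).symm

theorem eq_of_branchPrefix_eq {y z : ℕ → Bool} (m : ℕ)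
    (h : ∀ n ≥ m, branchPrefix y n = branchPrefix z n) : y = z := by
  funext i
  have hyz := List.ofFn_inj.1 (h (max m (i + 1)) (le_max_left _ _))
  exact congrFun hyz ⟨i, by omega⟩

theorem eq_of_forall_branchPrefix_mem {T : Set (List Bool)} {t : List Bool}
    (hchain : ∀ t₁ ∈ T, ∀ t₂ ∈ T, t <+: t₁ → t <+: t₂ → t₁ <+: t₂ ∨ t₂ <+: t₁)
    {y z : ℕ → Bool} (hy : y ∈ bcylinder t) (hz : z ∈ bcylinder t)
    (hyT : ∀ n, branchPrefix y n ∈ T) (hzT : ∀ n, branchPrefix z n ∈ T) : y = z := by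
  refine eq_of_branchPrefix_eq t.length fun n hn => ?_
  have hlen : (branchPrefix y n).length = (branchPrefix z n).length := by simp
  rcases hchain _ (hyT n) _ (hzT n) (prefix_branchPrefix hy hn) (prefix_branchPrefix hz hn)
    with h | h
  · exact h.eq_of_length hlen
  · exact (h.eq_of_length hlen.symm).symm

section CylinderUnion

variable {X : Type*} (𝒥 : Set (Set X)) (ξ : Set X → ℕ → Bool)

/-- The union `⋃J_s` of the subfamily `J_s = ξ⁻¹[2^ω_s]` of `𝒥`. -/
def cylinderUnion (s : List Bool) : Set X := ⋃₀ {J ∈ 𝒥 | ξ J ∈ bcylinder s}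

variable {𝒥 ξ}

theorem cylinderUnion_nil : cylinderUnion 𝒥 ξ [] = ⋃₀ 𝒥 := by
  simp [cylinderUnion, bcylinder_nil]

theorem cylinderUnion_anti {s t : List Bool} (h : s <+: t) :
    cylinderUnion 𝒥 ξ t ⊆ cylinderUnion 𝒥 ξ s :=
  Set.sUnion_subset_sUnion fun _ hJ => ⟨hJ.1, bcylinder_anti h hJ.2⟩

theorem exists_incomparable_of_not_mem {I : Set (Set X)} (hI : IsSigmaIdeal I)
    (h𝒥I : 𝒥 ⊆ I) (hξ : Set.InjOn ξ 𝒥) (S : Set X) {t : List Bool}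
    (ht : S ∩ cylinderUnion 𝒥 ξ t ∉ I) :
    ∃ t₁, S ∩ cylinderUnion 𝒥 ξ t₁ ∉ I ∧ ∃ t₂, S ∩ cylinderUnion 𝒥 ξ t₂ ∉ I ∧
      t <+: t₁ ∧ t <+: t₂ ∧ ¬ t₁ <+: t₂ ∧ ¬ t₂ <+: t₁ := by
  set T : Set (List Bool) := {s | S ∩ cylinderUnion 𝒥 ξ s ∉ I}
  by_contra! hchain
  replace hchain : ∀ t₁ ∈ T, ∀ t₂ ∈ T, t <+: t₁ → t <+: t₂ → t₁ <+: t₂ ∨ t₂ <+: t₁ :=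
    fun t₁ h₁ t₂ h₂ ht₁ ht₂ => or_iff_not_imp_left.2 (hchain t₁ h₁ t₂ h₂ ht₁ ht₂)
  set G : Set X := ⋃ s : {s // s ∉ T}, S ∩ cylinderUnion 𝒥 ξ s
  have hG : G ∈ I := hI.iUnion_mem fun s => not_not.1 s.2
  have hprefix_mem : ∀ p ∈ S \ G, ∀ J ∈ 𝒥, p ∈ J → ∀ n, branchPrefix (ξ J) n ∈ T := by
    intro p ⟨hpS, hpG⟩ J hJ hpJ n hn
    exact hpG (Set.mem_iUnion.2
      ⟨⟨_, not_not.2 hn⟩, hpS, J, ⟨hJ, mem_bcylinder_branchPrefix _ _⟩, hpJ⟩)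
  set 𝒦 : Set (Set X) := {J ∈ 𝒥 | ξ J ∈ bcylinder t ∧ (J ∩ (S \ G)).Nonempty}
  have h𝒦 : 𝒦.Subsingleton := by
    rintro J ⟨hJ, hJt, p, hpJ, hp⟩ J' ⟨hJ', hJ't, p', hpJ', hp'⟩
    exact hξ hJ hJ' (eq_of_forall_branchPrefix_mem hchain hJt hJ't
      (hprefix_mem p hp J hJ hpJ) (hprefix_mem p' hp' J' hJ' hpJ'))
  have hcover : S ∩ cylinderUnion 𝒥 ξ t ⊆ ⋃₀ insert G 𝒦 := by
    rintro p ⟨hpS, J, ⟨hJ, hJt⟩, hpJ⟩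
    by_cases hpG : p ∈ G
    · exact ⟨G, Set.mem_insert _ _, hpG⟩
    · exact ⟨J, Set.mem_insert_of_mem _ ⟨hJ, hJt, p, hpJ, hpS, hpG⟩, hpJ⟩
  refine ht (hI.mem_of_subset _ _ (hI.sUnion_mem (h𝒦.countable.insert G) ?_) hcover)
  exact Set.insert_subset hG fun J hJ => h𝒥I hJ.1

end CylinderUnion

theorem perfect_tree_of_positive_union_general {X : Type*} (I : Set (Set X))
    (hne : I.Nonempty)
    (hdown : ∀ A B : Set X, A ∈ I → B ⊆ A → B ∈ I)
    (hcu : ∀ f : ℕ → Set X, (∀ n, f n ∈ I) → (⋃ n, f n) ∈ I)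
    (𝒥 : Set (Set X)) (h𝒥I : 𝒥 ⊆ I)
    (ξ : Set X → (ℕ → Bool)) (hξinj : Set.InjOn ξ 𝒥)
    (S : Set X) (hS : S ∩ ⋃₀ 𝒥 ∉ I) :
    letI T : Set (List Bool) := {t | S ∩ ⋃₀ {J ∈ 𝒥 | ξ J ∈ bcylinder t} ∉ I}
    ([] ∈ T) ∧ (∀ t ∈ T, ∀ s : List Bool, s <+: t → s ∈ T) ∧
      (∀ t ∈ T, ∃ t₁ ∈ T, ∃ t₂ ∈ T, t <+: t₁ ∧ t <+: t₂ ∧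
        ¬ t₁ <+: t₂ ∧ ¬ t₂ <+: t₁) := by
  have hI : IsSigmaIdeal I := ⟨hne, hdown, hcu⟩
  refine ⟨?_, fun t ht s hst hs => ?_, fun t ht => ?_⟩
  · change S ∩ cylinderUnion 𝒥 ξ [] ∉ I
    rwa [cylinderUnion_nil]
  · exact ht (hdown _ _ hs (Set.inter_subset_inter_right S (cylinderUnion_anti hst)))
  · exact exists_incomparable_of_not_mem hI h𝒥I hξinj S ht

/-- given a point-finite family 𝒥 ⊆ I and an injection ξ of 𝒥 into a
set 𝔅 ⊆ 2^ω of cardinality 𝔠 without uncountable compact subsets, setting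
J_s = ξ⁻¹[2^ω_s], for any S with S ∩ ⋃𝒥 ∉ I the set
T = {t : S ∩ ⋃J_t ∉ I} is a perfect subtree of 2^{<ω}. -/
theorem perfect_tree_of_positive_union {X : Type*} (I : Set (Set X))
    (hne : I.Nonempty)
    (hdown : ∀ A B : Set X, A ∈ I → B ⊆ A → B ∈ I)
    (hcu : ∀ f : ℕ → Set X, (∀ n, f n ∈ I) → (⋃ n, f n) ∈ I)
    (𝒥 : Set (Set X)) (h𝒥I : 𝒥 ⊆ I)
    (hpf : ∀ x : X, {J ∈ 𝒥 | x ∈ J}.Finite)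
    (𝔅 : Set (ℕ → Bool)) (h𝔅card : Cardinal.mk 𝔅 = Cardinal.continuum)
    (h𝔅cpt : ∀ K ⊆ 𝔅, IsCompact K → K.Countable)
    (ξ : Set X → (ℕ → Bool)) (hξinj : Set.InjOn ξ 𝒥) (hξ𝔅 : ξ '' 𝒥 ⊆ 𝔅)
    (S : Set X) (hS : S ∩ ⋃₀ 𝒥 ∉ I) :
    letI T : Set (List Bool) := {t | S ∩ ⋃₀ {J ∈ 𝒥 | ξ J ∈ bcylinder t} ∉ I}
    ([] ∈ T) ∧ (∀ t ∈ T, ∀ s : List Bool, s <+: t → s ∈ T) ∧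
      (∀ t ∈ T, ∃ t₁ ∈ T, ∃ t₂ ∈ T, t <+: t₁ ∧ t <+: t₂ ∧
        ¬ t₁ <+: t₂ ∧ ¬ t₂ <+: t₁) :=
  perfect_tree_of_positive_union_general I hne hdown hcu 𝒥 h𝒥I ξ hξinj S hS
end

section
/- Let X be a set and A, F families of subsets of X with F ⊆ A ⊆ S(F), where S(F) = {S ⊆ X : ∀F∈F ∃H∈F (H ⊆ F ∩ S ∨ H ⊆ F \ S)} and S₀(F) = {S ⊆ X : ∀F∈F ∃H∈F (H ⊆ F \ S)}. Then a subset S ⊆ X belongs to S(F) if and only if S is (A, S₀(F))-saturated. -/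
/-- The Marczewski–Burstin measurable algebra of a family ℱ. -/
def MBalg {X : Type*} (ℱ : Set (Set X)) : Set (Set X) :=
  {S | ∀ F ∈ ℱ, ∃ H ∈ ℱ, H ⊆ F ∩ S ∨ H ⊆ F \ S}

/-- The Marczewski–Burstin null ideal of a family ℱ. -/
def MBnull {X : Type*} (ℱ : Set (Set X)) : Set (Set X) :=
  {S | ∀ F ∈ ℱ, ∃ H ∈ ℱ, H ⊆ F \ S}

/-- if ℱ ⊆ 𝒜 ⊆ S(ℱ), then S ∈ S(ℱ) iff S is (𝒜, S₀(ℱ))-saturated. -/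
theorem mb_measurable_iff_saturated {X : Type*} (ℱ 𝒜 : Set (Set X))
    (h₁ : ℱ ⊆ 𝒜) (h₂ : 𝒜 ⊆ MBalg ℱ) (S : Set X) :
    S ∈ MBalg ℱ ↔
      ∀ A ∈ 𝒜, A ∩ S ∉ MBnull ℱ → ∃ B ∈ 𝒜, B ⊆ A ∩ S ∧ B ∉ MBnull ℱ := by
  constructor
  · intro hS A hA hAS
    -- get F witnessing A ∩ S ∉ MBnull
    simp only [MBnull, Set.mem_setOf_eq, not_forall] at hAS
    obtain ⟨F, hF, hFno⟩ := hAS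
    simp only [not_exists, not_and] at hFno
    obtain ⟨H, hH, hHsub⟩ := h₂ hA F hF
    cases hHsub with
    | inr h => exact absurd (h.trans (Set.diff_subset_diff_right Set.inter_subset_left)) (hFno H hH)
    | inl h =>
      obtain ⟨H', hH', hH'sub⟩ := hS H hH
      cases hH'sub with
      | inr h' =>
        exact absurd (fun x hx => ⟨(h (h' hx).1).1, fun hxs => (h' hx).2 hxs.2⟩) (hFno H' hH')
      | inl h' =>
        refine ⟨H', h₁ hH', fun x hx => ⟨(h (h' hx).1).2, (h' hx).2⟩, ?_⟩
        intro hnull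
        obtain ⟨H'', hH'', hsub⟩ := hnull H' hH'
        have : H'' = ∅ := Set.subset_empty_iff.mp (by simpa using hsub)
        subst this
        exact hFno ∅ hH'' (Set.empty_subset _)
  · intro hsat F hF
    by_cases hc : F ∩ S ∈ MBnull ℱ
    · obtain ⟨H, hH, hsub⟩ := hc F hF
      exact ⟨H, hH, Or.inr fun x hx => ⟨(hsub hx).1, fun hs => (hsub hx).2 ⟨(hsub hx).1, hs⟩⟩⟩
    · obtain ⟨B, hB, hBsub, hBnn⟩ := hsat F (h₁ hF) hc
      simp only [MBnull, Set.mem_setOf_eq, not_forall] at hBnn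
      obtain ⟨F', hF', hF'no⟩ := hBnn
      simp only [not_exists, not_and] at hF'no
      obtain ⟨H, hH, hHsub⟩ := h₂ hB F' hF'
      cases hHsub with
      | inl h => exact ⟨H, hH, Or.inl fun x hx => hBsub (h hx).2⟩
      | inr h => exact absurd h (hF'no H hH)
end
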